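/- arXiv:1901.01719 — 7 statements merged into one kernel-verified Lean document; each statement's English description precedes it below -/
import Mathlib

section
/- Let (α_n)_{n≥1} and (β_n)_{n≥1} be real sequences, and let (f_n)_{n≥0} be real polynomials with f_0 = 1 and f_n(x) = (α_n x + β_n)·f_{n−1}(x) for all n ≥ 1. Suppose (P_n)_{n≥0} are real polynomials satisfying, as an identity of formal power series in t, P_n(t) = (1−t)^{n+1} · Σ_{k≥0} f_n(k) t^k for each n ≥ 0. Then for every n ≥ 1, P_n(t) = ((α_n n − β_n) t + β_n) · P_{n−1}(t) + α_n · t(1−t) · P'_{n−1}(t), where P' denotes the formal derivative. -/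
/-!
Multiplying a coefficient sequence by `k` acts as `t · d/dt` on its generating function, so
`Σ f_n(k) t^k = (α_n t d/dt + β_n) Σ f_{n-1}(k) t^k`. Multiplying by `(1-t)^{n+1}` and moving
`d/dt` past `(1-t)^n` with the Leibniz rule expresses the right side through `P_{n-1}` and
`P'_{n-1}`; the computation is done in `ℝ⟦X⟧`, with no division.
-/

open Polynomial PowerSeries

namespace PowerSeries

section CommSemiring

variable {R : Type*} [CommSemiring R]

theorem mk_natCast_mul_eq_X_mul_derivative (g : ℕ → R) :
    mk (fun k => (k : R) * g k) = X * d⁄dX R (mk g) := by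
  ext (_ | k)
  · simp
  · rw [coeff_succ_X_mul, coeff_mk, coeff_derivative, coeff_mk]
    push_cast
    ring

theorem mk_eval_C_mul_X_add_C_mul (a b : R) (p : R[X]) :
    mk (fun k => ((Polynomial.C a * Polynomial.X + Polynomial.C b) * p).eval (k : R))
      = C a * (X * d⁄dX R (mk fun k => p.eval (k : R))) + C b * mk fun k => p.eval (k : R) := by
  rw [← mk_natCast_mul_eq_X_mul_derivative]
  ext k
  simp only [eval_mul, eval_add, eval_C, eval_X, map_add, coeff_mk, coeff_C_mul]
  ring

end CommSemiring

section CommRing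

variable {R : Type*} [CommRing R]

theorem derivative_one_sub_X_pow_succ_mul (m : ℕ) (A : R⟦X⟧) :
    d⁄dX R ((1 - X) ^ (m + 1) * A)
      = (1 - X) ^ (m + 1) * d⁄dX R A - C ((m : R) + 1) * (1 - X) ^ m * A := by
  rw [Derivation.leibniz, Derivation.leibniz_pow, map_sub, derivative_X, derivative_one]
  simp only [smul_eq_mul, nsmul_eq_mul, Nat.add_sub_cancel, map_add, map_natCast, map_one]
  push_cast
  ring

theorem one_sub_X_pow_mul_recurrence (m : ℕ) (a b : R) (A : R⟦X⟧) :
    (1 - X) ^ (m + 2) * (C a * (X * d⁄dX R A) + C b * A)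
      = (C (a * ((m : R) + 1) - b) * X + C b) * ((1 - X) ^ (m + 1) * A)
        + C a * X * (1 - X) * d⁄dX R ((1 - X) ^ (m + 1) * A) := by
  rw [derivative_one_sub_X_pow_succ_mul]
  simp only [map_sub, map_mul, map_add, map_one]
  ring

end CommRing

end PowerSeries

theorem rational_gf_recurrence_general (α β : ℕ → ℝ) (f P : ℕ → Polynomial ℝ)
    (hf : ∀ n : ℕ, 1 ≤ n →
      f n = (Polynomial.C (α n) * Polynomial.X + Polynomial.C (β n)) * f (n - 1))
    (hP : ∀ n : ℕ, (P n : PowerSeries ℝ)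
        = (1 - PowerSeries.X) ^ (n + 1) * PowerSeries.mk (fun k => (f n).eval (k : ℝ)))
    (n : ℕ) (hn : 1 ≤ n) :
    P n = (Polynomial.C (α n * n - β n) * Polynomial.X + Polynomial.C (β n)) * P (n - 1)
      + Polynomial.C (α n) * Polynomial.X * (1 - Polynomial.X)
        * Polynomial.derivative (P (n - 1)) := by
  obtain ⟨m, rfl⟩ : ∃ m, n = m + 1 := ⟨n - 1, (Nat.succ_pred_eq_of_pos hn).symm⟩
  rw [← Polynomial.coe_inj]
  simp only [Nat.add_sub_cancel, Polynomial.coe_add, Polynomial.coe_mul, Polynomial.coe_sub,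
    Polynomial.coe_one, Polynomial.coe_C, Polynomial.coe_X, ← derivative_coe, hP,
    hf (m + 1) (Nat.le_add_left 1 m), mk_eval_C_mul_X_add_C_mul]
  push_cast
  exact one_sub_X_pow_mul_recurrence m _ _ _

/-- If `f_n(x) = (α_n x + β_n) f_{n-1}(x)` with `f_0 = 1`, and the polynomials `P_n`
satisfy `P_n(t) = (1-t)^{n+1} Σ_{k≥0} f_n(k) t^k` as formal power series, then
`P_n(t) = ((α_n n - β_n) t + β_n) P_{n-1}(t) + α_n t (1-t) P'_{n-1}(t)`. -/
theorem rational_gf_recurrence (α β : ℕ → ℝ) (f P : ℕ → Polynomial ℝ)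
    (hf0 : f 0 = 1)
    (hf : ∀ n : ℕ, 1 ≤ n →
      f n = (Polynomial.C (α n) * Polynomial.X + Polynomial.C (β n)) * f (n - 1))
    (hP : ∀ n : ℕ, (P n : PowerSeries ℝ)
        = (1 - PowerSeries.X) ^ (n + 1) * PowerSeries.mk (fun k => (f n).eval (k : ℝ)))
    (n : ℕ) (hn : 1 ≤ n) :
    P n = (Polynomial.C (α n * n - β n) * Polynomial.X + Polynomial.C (β n)) * P (n - 1)
      + Polynomial.C (α n) * Polynomial.X * (1 - Polynomial.X)
        * Polynomial.derivative (P (n - 1)) :=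
  rational_gf_recurrence_general α β f P hf hP n hn
end

section
/- Let (α_n)_{n≥1} and (β_n)_{n≥1} be real sequences, and let (f_n)_{n≥0} be real polynomials with f_0 = 1 and f_n(x) = (α_n x + β_n)·f_{n−1}(x) for all n ≥ 1. Suppose (P_n)_{n≥0} are real polynomials satisfying, as an identity of formal power series in t, P_n(t) = (1−t)^{n+1} · Σ_{k≥0} f_n(k) t^k for each n ≥ 0. Then for every n ≥ 0, P_n(1) = n! · Π_{i=1}^{n} α_i. -/
open Polynomial PowerSeries

/-!
Multiplying `f` by `a x + b` acts on `Σ f(k) tᵏ` as the operator `a t d/dt + b`. If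
`Σ f_n(k) tᵏ = P_n(t) / (1 - t)^{n+1}`, differentiating this quotient shows that the numerator
for `f_{n+1}` is `P_{n+1} = a t ((1 - t) P_n' + (n + 1) P_n) + b (1 - t) P_n`, and at `t = 1`
only the term `(n + 1) a P_n(1)` survives.
-/

namespace PowerSeries

variable {R : Type*}

theorem mk_natCast_mul [CommSemiring R] (g : ℕ → R) :
    mk (fun k => (k : R) * g k) = X * d⁄dX R (mk g) := by
  ext (_ | m)
  · simp
  · rw [coeff_succ_X_mul, coeff_derivative, coeff_mk, coeff_mk]
    push_cast
    ring

theorem mk_eval_linear_mul [CommSemiring R] (a b : R) (f : R[X]) :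
    mk (fun k => ((Polynomial.C a * Polynomial.X + Polynomial.C b) * f).eval (k : R))
      = C a * (X * d⁄dX R (mk fun k => f.eval (k : R))) + C b * mk fun k => f.eval (k : R) := by
  rw [← mk_natCast_mul]
  ext k
  simp only [eval_mul, eval_add, eval_C, eval_X, map_add, coeff_C_mul, coeff_mk]
  ring

theorem coe_linear_numerator_of_coe_eq_one_sub_X_pow_mul [CommRing R] {P : R[X]} {G : R⟦X⟧}
    {m : ℕ} (a b : R) (hP : (P : R⟦X⟧) = (1 - X) ^ (m + 1) * G) :
    ((Polynomial.C a * Polynomial.X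
          * ((1 - Polynomial.X) * Polynomial.derivative P + (m + 1 : R[X]) * P)
        + Polynomial.C b * (1 - Polynomial.X) * P : R[X]) : R⟦X⟧)
      = (1 - X) ^ (m + 2) * (C a * (X * d⁄dX R G) + C b * G) := by
  have hdP : d⁄dX R (P : R⟦X⟧)
      = (1 - X) ^ (m + 1) * d⁄dX R G - (m + 1 : R⟦X⟧) * (1 - X) ^ m * G := by
    rw [hP, Derivation.leibniz, derivative_pow, map_sub, derivative_one, derivative_X]
    simp only [smul_eq_mul, Nat.add_sub_cancel]
    push_cast
    ring
  have hcoe_natCast : ((m : R[X]) : R⟦X⟧) = m := map_natCast coeToPowerSeries.ringHom m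
  push_cast [coe_C, ← derivative_coe, hcoe_natCast]
  rw [hdP, hP]
  ring

end PowerSeries

/-- If `f_n(x) = (α_n x + β_n) f_{n-1}(x)` with `f_0 = 1`, and the polynomials `P_n`
satisfy `P_n(t) = (1-t)^{n+1} Σ_{k≥0} f_n(k) t^k` as formal power series, then
`P_n(1) = n! ∏_{i=1}^n α_i`. -/
theorem rational_gf_eval_one (α β : ℕ → ℝ) (f P : ℕ → Polynomial ℝ)
    (hf0 : f 0 = 1)
    (hf : ∀ n : ℕ, 1 ≤ n →
      f n = (Polynomial.C (α n) * Polynomial.X + Polynomial.C (β n)) * f (n - 1))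
    (hP : ∀ n : ℕ, (P n : PowerSeries ℝ)
        = (1 - PowerSeries.X) ^ (n + 1) * PowerSeries.mk (fun k => (f n).eval (k : ℝ)))
    (n : ℕ) :
    (P n).eval 1 = (Nat.factorial n : ℝ) * ∏ i ∈ Finset.Icc 1 n, α i := by
  induction n with
  | zero =>
    have hP0 : P 0 = 1 := Polynomial.coe_inj.mp <| by
      rw [hP 0, hf0, Polynomial.coe_one, zero_add, pow_one, mul_comm]
      simp only [eval_one]
      exact mk_one_mul_one_sub_eq_one ℝ
    simp [hP0]
  | succ n ih =>
    have hP_succ : P (n + 1) = Polynomial.C (α (n + 1)) * Polynomial.X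
          * ((1 - Polynomial.X) * Polynomial.derivative (P n) + (n + 1 : ℝ[X]) * P n)
        + Polynomial.C (β (n + 1)) * (1 - Polynomial.X) * P n :=
      Polynomial.coe_inj.mp <| by
        rw [coe_linear_numerator_of_coe_eq_one_sub_X_pow_mul _ _ (hP n), hP,
          hf (n + 1) n.succ_pos, Nat.add_sub_cancel, mk_eval_linear_mul]
    rw [hP_succ, Finset.prod_Icc_succ_top (by omega), Nat.factorial_succ]
    simp only [eval_add, eval_mul, eval_C, eval_X, eval_sub, eval_one, eval_natCast, sub_self,
      zero_mul, mul_zero, add_zero, mul_one, ih]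
    push_cast
    ring
end

section
/- For every integer n ≥ 1, Σ_{k=0}^{n−1} Π_{i=1}^{k} (2n−2i)/(2n−2i+1) = (2n+1)/3, where the empty product (k = 0) equals 1. -/
/-!
Write the factors as `(c i - 1) / c i` with `c i = 2n - 2i + 1`, an arithmetic progression of
step `-2`. Then `f k = c k · P k`, with `P k` the `k`-th product, satisfies `f k - f (k + 1) = 3 P k`,
so the sum telescopes to `(c 0 - c n · P n) / 3`, and `P n = 0` because its last factor vanishes.
-/

open Finset

theorem mul_sum_range_prod_Icc_sub_one_div {K : Type*} [Field K] (c : ℕ → K) (d : K)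
    (hstep : ∀ k, c (k + 1) = c k - d) (m : ℕ) (hc : ∀ i ∈ Icc 1 m, c i ≠ 0) :
    (d + 1) * ∑ k ∈ range m, ∏ i ∈ Icc 1 k, (c i - 1) / c i
      = c 0 - c m * ∏ i ∈ Icc 1 m, (c i - 1) / c i := by
  induction m with
  | zero => simp
  | succ m ih =>
    have hcm : c m - d ≠ 0 := hstep m ▸ hc (m + 1) (by simp)
    rw [sum_range_succ, prod_Icc_succ_top (Nat.le_add_left 1 m), mul_add,
      ih fun i hi => hc i (Icc_subset_Icc_right m.le_succ hi), hstep m]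
    field_simp
    ring

/-- Bóna's identity: `Σ_{k=0}^{n-1} Π_{i=1}^{k} (2n-2i)/(2n-2i+1) = (2n+1)/3`. -/
theorem bona_identity (n : ℕ) (hn : 1 ≤ n) :
    ∑ k ∈ Finset.range n, ∏ i ∈ Finset.Icc 1 k,
        ((2 * (n : ℚ) - 2 * (i : ℚ)) / (2 * (n : ℚ) - 2 * (i : ℚ) + 1))
      = (2 * (n : ℚ) + 1) / 3 := by
  set c : ℕ → ℚ := fun i => 2 * n - 2 * i + 1
  have hfactor (i : ℕ) : (2 * (n : ℚ) - 2 * i) / (2 * n - 2 * i + 1) = (c i - 1) / c i := by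
    simp [c]
  have hc_ne (i : ℕ) : c i ≠ 0 := by
    intro h
    have : ((2 * n + 1 : ℕ) : ℚ) = ((2 * i : ℕ) : ℚ) := by push_cast; linarith
    have := Nat.cast_injective this
    omega
  have hlast : ∏ i ∈ Icc 1 n, (c i - 1) / c i = 0 :=
    prod_eq_zero (mem_Icc.2 ⟨hn, le_rfl⟩) (by simp [c])
  have key := mul_sum_range_prod_Icc_sub_one_div c 2 (fun k => by simp [c]; ring) n
    (fun i _ => hc_ne i)
  simp only [hfactor]
  rw [hlast, mul_zero, sub_zero] at key
  simp only [c, Nat.cast_zero, mul_zero, sub_zero] at key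
  linarith
end

section
/- Let L_{n,k} be the number of permutations of S_n whose longest alternating subsequence has length exactly k. Then for all n ≥ 1 and all k ≥ 0, L_{n+1,k} = k·L_{n,k} + L_{n,k−1} + (n − k + 2)·L_{n,k−2}, where terms with negative second index are interpreted as 0. -/
open Finset

/-- `AltChain b l` says that the list `l` is alternating, starting with a descent if
`b = true` (i.e. `l = [a₁, a₂, a₃, …]` with `a₁ > a₂ < a₃ > ⋯`) and starting with an
ascent if `b = false`. -/
def AltChain {α : Type*} [LT α] : Bool → List α → Prop
  | _, [] => True
  | _, [_] => True
  | true, a :: b :: rest => b < a ∧ AltChain false (b :: rest)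
  | false, a :: b :: rest => a < b ∧ AltChain true (b :: rest)

/-- The length of the longest alternating subsequence of the permutation `π`: the
largest `k` for which there are indices `i₁ < i₂ < ⋯ < i_k` with
`π(i₁) > π(i₂) < π(i₃) > ⋯` (alternating, starting with a descent). -/
noncomputable def las {n : ℕ} (π : Equiv.Perm (Fin n)) : ℕ :=
  sSup {k : ℕ | ∃ l : List (Fin n), l.Chain' (· < ·) ∧ l.length = k ∧
    AltChain true (l.map π)}

open scoped Classical in
/-- `L_{n,k}`: the number of permutations of `S_n` whose longest alternating
subsequence has length exactly `k` (indexed by an integer `k`, so that terms with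
negative index vanish automatically). -/
noncomputable def lasCount (n : ℕ) (k : ℤ) : ℕ :=
  (Finset.univ.filter (fun π : Equiv.Perm (Fin n) => (las π : ℤ) = k)).card

/-!
Inserting the new maximum into the one-line notation of `σ ∈ S_n` at each of the `n + 1`
positions produces every permutation of `S_{n+1}` exactly once. If the longest alternating
subsequence of `σ` has length `a`, then `a` of these insertions keep that length, one raises it
to `a + 1` and the remaining `n - a` raise it to `a + 2`; summing over `σ` gives the recurrence.
The length is computed greedily, taking each turn in the required direction as soon as it
appears, and the insertion count is proved by induction on the one-line notation: peel off its
first entry and compare it with the second entry and with the inserted maximum.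
-/

open List

lemma Multiset.map_range_succ {β : Type*} (g : ℕ → β) (n : ℕ) :
    (Multiset.range (n + 1)).map g = g 0 ::ₘ (Multiset.range n).map (fun j => g (j + 1)) := by
  rw [Multiset.range, range_succ_eq_map]
  simp only [Multiset.map_coe, List.map_cons, List.map_map]
  rfl

lemma List.ofFn_insertNth {β : Type*} {n : ℕ} (i : Fin (n + 1)) (x : β) (p : Fin n → β) :
    ofFn (Fin.insertNth i x p) = (ofFn p).insertIdx i x := by
  induction n with
  | zero => rw [Fin.fin_one_eq_zero i, Fin.insertNth_zero', ofFn_cons]; rfl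
  | succ n ih =>
    cases i using Fin.cases with
    | zero => rw [Fin.insertNth_zero', ofFn_cons]; rfl
    | succ i =>
      rw [← Fin.cons_self_tail p, Fin.insertNth_succ_cons, ofFn_cons, ofFn_cons, ih, Fin.val_succ,
        insertIdx_succ_cons]

lemma List.sublist_finRange_iff {n : ℕ} {l : List (Fin n)} :
    l <+ finRange n ↔ l.IsChain (· < ·) := by
  rw [isChain_iff_pairwise]
  refine ⟨fun h => (pairwise_lt_finRange n).sublist h, fun h => ?_⟩
  exact sublist_of_subperm_of_pairwise (h.nodup.subperm fun a _ => mem_finRange a) h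
    (pairwise_lt_finRange n)

section AltLen

variable {α β : Type*} [LinearOrder α] [LinearOrder β]

/-- Greedy count: scanning the list, a turn in the direction required by `b` (as in `AltChain b`)
is taken as soon as it appears. -/
def altLen : Bool → List α → ℕ
  | _, [] => 0
  | _, [_] => 1
  | true, a :: b :: t => if b < a then altLen false (b :: t) + 1 else altLen true (b :: t)
  | false, a :: b :: t => if a < b then altLen true (b :: t) + 1 else altLen false (b :: t)

@[simp] lemma altLen_nil (b : Bool) : altLen b ([] : List α) = 0 := by cases b <;> rfl

@[simp] lemma altLen_singleton (b : Bool) (a : α) : altLen b [a] = 1 := by cases b <;> rfl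

lemma altLen_true_cons_cons_of_lt {x y : α} (t : List α) (h : y < x) :
    altLen true (x :: y :: t) = altLen false (y :: t) + 1 := if_pos h

lemma altLen_true_cons_cons_of_le {x y : α} (t : List α) (h : x ≤ y) :
    altLen true (x :: y :: t) = altLen true (y :: t) := if_neg h.not_gt

lemma altLen_false_cons_cons_of_lt {x y : α} (t : List α) (h : x < y) :
    altLen false (x :: y :: t) = altLen true (y :: t) + 1 := if_pos h

lemma altLen_false_cons_cons_of_le {x y : α} (t : List α) (h : y ≤ x) :
    altLen false (x :: y :: t) = altLen false (y :: t) := if_neg h.not_gt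

lemma altLen_le_length (b : Bool) (l : List α) : altLen b l ≤ l.length := by
  induction l generalizing b with
  | nil => simp
  | cons x t ih =>
    rcases t with _ | ⟨y, t⟩
    · simp
    have := ih true
    have := ih false
    cases b
    · rcases lt_or_ge x y with h | h
      · rw [altLen_false_cons_cons_of_lt t h]; grind
      · rw [altLen_false_cons_cons_of_le t h]; grind
    · rcases lt_or_ge y x with h | h
      · rw [altLen_true_cons_cons_of_lt t h]; grind
      · rw [altLen_true_cons_cons_of_le t h]; grind

lemma altLen_le_altLen_not_add_one (b : Bool) (l : List α) : altLen b l ≤ altLen (!b) l + 1 := by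
  induction l generalizing b with
  | nil => simp
  | cons x t ih =>
    rcases t with _ | ⟨y, t⟩
    · simp
    have h₁ := ih true
    have h₂ := ih false
    simp only [Bool.not_true, Bool.not_false] at h₁ h₂
    rcases lt_trichotomy x y with h | rfl | h
    · cases b <;> simp only [Bool.not_true, Bool.not_false, altLen_false_cons_cons_of_lt t h,
        altLen_true_cons_cons_of_le t h.le] <;> omega
    · cases b <;> simp only [Bool.not_true, Bool.not_false, altLen_false_cons_cons_of_le t le_rfl,
        altLen_true_cons_cons_of_le t le_rfl] <;> omega
    · cases b <;> simp only [Bool.not_true, Bool.not_false, altLen_true_cons_cons_of_lt t h,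
        altLen_false_cons_cons_of_le t h.le] <;> omega

lemma altLen_le_altLen_cons (b : Bool) (x : α) (l : List α) :
    altLen b l ≤ altLen b (x :: l) := by
  rcases l with _ | ⟨y, t⟩
  · simp
  have := altLen_le_altLen_not_add_one b (y :: t)
  cases b
  · rcases lt_or_ge x y with h | h
    · rw [altLen_false_cons_cons_of_lt t h]; exact this
    · rw [altLen_false_cons_cons_of_le t h]
  · rcases lt_or_ge y x with h | h
    · rw [altLen_true_cons_cons_of_lt t h]; exact this
    · rw [altLen_true_cons_cons_of_le t h]

lemma length_le_altLen {b : Bool} {s l : List α} (hs : s <+ l) (h : AltChain b s) :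
    s.length ≤ altLen b l := by
  induction l generalizing s b with
  | nil => simp [sublist_nil.mp hs]
  | cons x t ih =>
    rcases s with _ | ⟨a, s⟩
    · simp
    rcases cons_sublist_cons'.mp hs with hst | ⟨rfl, hst⟩
    · exact (ih hst h).trans (altLen_le_altLen_cons b x t)
    rcases t with _ | ⟨y, t⟩
    · simp [sublist_nil.mp hst]
    rcases s with _ | ⟨z, s⟩
    · exact (ih (s := [y]) (by simp) trivial).trans (altLen_le_altLen_cons b a _)
    have tail_of_ne (hzy : z ≠ y) : z :: s <+ t :=
      (cons_sublist_cons'.mp hst).resolve_right fun h => hzy h.1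
    -- Without a turn from `a` to `y` in the required direction, `y` can replace `a` as the head.
    cases b
    · obtain ⟨haz, h⟩ : a < z ∧ AltChain true (z :: s) := h
      rcases lt_or_ge a y with hay | hya
      · rw [altLen_false_cons_cons_of_lt t hay]
        simpa using ih hst h
      · rw [altLen_false_cons_cons_of_le t hya]
        have hyz := hya.trans_lt haz
        simpa using ih ((tail_of_ne hyz.ne').cons_cons y) (show AltChain false _ from ⟨hyz, h⟩)
    · obtain ⟨hza, h⟩ : z < a ∧ AltChain false (z :: s) := h
      rcases lt_or_ge y a with hya | hay
      · rw [altLen_true_cons_cons_of_lt t hya]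
        simpa using ih hst h
      · rw [altLen_true_cons_cons_of_le t hay]
        have hzy := hza.trans_le hay
        simpa using ih ((tail_of_ne hzy.ne).cons_cons y) (show AltChain true _ from ⟨hzy, h⟩)

/-- The bound on the head `z` is what lets the induction prepend `x`. -/
lemma exists_altChain_sublist_length_eq_altLen (b : Bool) (x : α) (t : List α) :
    ∃ z s, z :: s <+ x :: t ∧ AltChain b (z :: s) ∧ (z :: s).length = altLen b (x :: t) ∧
      (b = true → x ≤ z) ∧ (b = false → z ≤ x) := by
  induction t generalizing x b with
  | nil =>
    exact ⟨x, [], .refl _, by cases b <;> trivial, by simp, fun _ => le_rfl, fun _ => le_rfl⟩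
  | cons y t ih =>
    cases b
    · rcases lt_or_ge x y with hxy | hyx
      · obtain ⟨z, s, hs, h, hlen, hyz, -⟩ := ih true y
        refine ⟨x, z :: s, hs.cons_cons x, ⟨hxy.trans_le (hyz rfl), h⟩, ?_, by simp,
          fun _ => le_rfl⟩
        rw [altLen_false_cons_cons_of_lt t hxy, ← hlen, length_cons]
      · obtain ⟨z, s, hs, h, hlen, -, hzy⟩ := ih false y
        refine ⟨z, s, hs.cons x, h, ?_, by simp, fun _ => (hzy rfl).trans hyx⟩
        rw [altLen_false_cons_cons_of_le t hyx, hlen]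
    · rcases lt_or_ge y x with hyx | hxy
      · obtain ⟨z, s, hs, h, hlen, -, hzy⟩ := ih false y
        refine ⟨x, z :: s, hs.cons_cons x, ⟨(hzy rfl).trans_lt hyx, h⟩, ?_, fun _ => le_rfl,
          by simp⟩
        rw [altLen_true_cons_cons_of_lt t hyx, ← hlen, length_cons]
      · obtain ⟨z, s, hs, h, hlen, hyz, -⟩ := ih true y
        refine ⟨z, s, hs.cons x, h, ?_, fun _ => hxy.trans (hyz rfl), by simp⟩
        rw [altLen_true_cons_cons_of_le t hxy, hlen]

lemma exists_altChain_sublist (b : Bool) (l : List α) :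
    ∃ s, s <+ l ∧ AltChain b s ∧ s.length = altLen b l := by
  rcases l with _ | ⟨x, t⟩
  · exact ⟨[], .refl _, by cases b <;> trivial, by simp⟩
  · obtain ⟨z, s, hs, h, hlen, -⟩ := exists_altChain_sublist_length_eq_altLen b x t
    exact ⟨z :: s, hs, h, hlen⟩

lemma altLen_map_of_strictMono {f : α → β} (hf : StrictMono f) (b : Bool) (l : List α) :
    altLen b (l.map f) = altLen b l := by
  induction l generalizing b with
  | nil => simp
  | cons x t ih =>
    rcases t with _ | ⟨y, t⟩
    · simp
    simp only [List.map_cons] at ih ⊢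
    cases b
    · rcases lt_or_ge x y with h | h
      · rw [altLen_false_cons_cons_of_lt _ (hf h), altLen_false_cons_cons_of_lt _ h, ih]
      · rw [altLen_false_cons_cons_of_le _ (hf.monotone h), altLen_false_cons_cons_of_le _ h, ih]
    · rcases lt_or_ge y x with h | h
      · rw [altLen_true_cons_cons_of_lt _ (hf h), altLen_true_cons_cons_of_lt _ h, ih]
      · rw [altLen_true_cons_cons_of_le _ (hf.monotone h), altLen_true_cons_cons_of_le _ h, ih]

end AltLen

def insertProfile (a n : ℕ) : Multiset ℕ :=
  Multiset.replicate a a + {a + 1} + Multiset.replicate (n - a) (a + 2)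

lemma cons_map_succ_insertProfile (a n : ℕ) :
    (a + 1) ::ₘ (insertProfile a n).map (· + 1) = insertProfile (a + 1) (n + 1) := by
  simp [insertProfile, Multiset.map_replicate, Multiset.replicate_succ, Multiset.cons_add]

lemma cons_insertProfile {a n : ℕ} (h : a ≤ n) :
    (a + 2) ::ₘ insertProfile a n = insertProfile a (n + 1) := by
  rw [insertProfile, insertProfile, Nat.sub_add_comm h, Multiset.replicate_succ, Multiset.add_cons]

section Insertion

variable {α : Type*} [LinearOrder α]

def insertAltLens (b : Bool) (M : α) (l : List α) : Multiset ℕ :=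
  (Multiset.range (l.length + 1)).map fun j => altLen b (l.insertIdx j M)

lemma insertAltLens_cons (b : Bool) (M x : α) (l : List α) :
    insertAltLens b M (x :: l) = altLen b (M :: x :: l) ::ₘ
      (Multiset.range (l.length + 1)).map fun j => altLen b (x :: l.insertIdx j M) := by
  rw [insertAltLens, length_cons, Multiset.map_range_succ]
  rfl

variable {M x y : α} {t : List α}

lemma insertAltLens_false_cons_cons (hxM : x < M) (hyM : y < M) (hxy : x ≠ y)
    (ih : ∀ b, insertAltLens b M (y :: t) = insertProfile (altLen b (y :: t)) (y :: t).length) :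
    insertAltLens false M (x :: y :: t) =
      insertProfile (altLen false (x :: y :: t)) (x :: y :: t).length := by
  have ha_le := altLen_le_length false (y :: t)
  set u := y :: t
  have hMu_true : altLen true (M :: u) = altLen false u + 1 := altLen_true_cons_cons_of_lt t hyM
  have hMu_false : altLen false (M :: u) = altLen false u := altLen_false_cons_cons_of_le t hyM.le
  rw [insertAltLens_cons]
  rcases hxy.lt_or_gt with hxy | hyx
  · have hj (j : ℕ) :
        altLen false (x :: u.insertIdx j M) = altLen true (u.insertIdx j M) + 1 := by
      cases j
      · exact altLen_false_cons_cons_of_lt _ hxM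
      · exact altLen_false_cons_cons_of_lt _ hxy
    have hhead : altLen false (M :: x :: u) = altLen false (x :: u) :=
      altLen_false_cons_cons_of_le _ hxM.le
    have hxu : altLen false (x :: u) = altLen true u + 1 := altLen_false_cons_cons_of_lt t hxy
    have hmap : (Multiset.range (u.length + 1)).map (fun j => altLen false (x :: u.insertIdx j M))
        = (insertAltLens true M u).map (· + 1) := by
      simp only [insertAltLens, Multiset.map_map, Function.comp_def, hj]
    rw [hmap, ih true, hhead, hxu]
    exact cons_map_succ_insertProfile _ _
  · -- Only the insertion right after `x` differs from the insertions into `u`: it creates the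
    -- two turns `x < M > y`.
    have hj (j : ℕ) :
        altLen false (x :: u.insertIdx (j + 1) M) = altLen false (u.insertIdx (j + 1) M) :=
      altLen_false_cons_cons_of_le _ hyx.le
    have hj₀ : altLen false (x :: M :: u) = altLen false u + 2 := by
      rw [altLen_false_cons_cons_of_lt _ hxM, hMu_true]
    have hhead : altLen false (M :: x :: u) = altLen false u := by
      rw [altLen_false_cons_cons_of_le _ hxM.le, altLen_false_cons_cons_of_le t hyx.le]
    have hxu : altLen false (x :: u) = altLen false u := altLen_false_cons_cons_of_le t hyx.le
    have hu := ih false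
    rw [insertAltLens, Multiset.map_range_succ, insertIdx_zero, hMu_false] at hu
    rw [Multiset.map_range_succ, insertIdx_zero, hj₀, hhead, hxu]
    simp only [hj]
    rw [Multiset.cons_swap, hu]
    exact cons_insertProfile ha_le

lemma insertAltLens_true_cons_cons (hxM : x < M) (hyM : y < M) (hxy : x ≠ y)
    (ih : ∀ b, insertAltLens b M (y :: t) = insertProfile (altLen b (y :: t)) (y :: t).length) :
    insertAltLens true M (x :: y :: t) =
      insertProfile (altLen true (x :: y :: t)) (x :: y :: t).length := by
  have ha_le := altLen_le_length true (y :: t)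
  set u := y :: t
  have hMu_true : altLen true (M :: u) = altLen false u + 1 := altLen_true_cons_cons_of_lt t hyM
  have hMu_false : altLen false (M :: u) = altLen false u := altLen_false_cons_cons_of_le t hyM.le
  rw [insertAltLens_cons]
  rcases hxy.lt_or_gt with hxy | hyx
  · have hj (j : ℕ) : altLen true (x :: u.insertIdx j M) = altLen true (u.insertIdx j M) := by
      cases j
      · exact altLen_true_cons_cons_of_le _ hxM.le
      · exact altLen_true_cons_cons_of_le _ hxy.le
    have hhead : altLen true (M :: x :: u) = altLen true u + 2 := by
      rw [altLen_true_cons_cons_of_lt _ hxM, altLen_false_cons_cons_of_lt t hxy]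
    have hxu : altLen true (x :: u) = altLen true u := altLen_true_cons_cons_of_le t hxy.le
    have hmap : (Multiset.range (u.length + 1)).map (fun j => altLen true (x :: u.insertIdx j M))
        = insertAltLens true M u := by
      simp only [insertAltLens, hj]
    rw [hmap, ih true, hhead, hxu]
    exact cons_insertProfile ha_le
  · have hj (j : ℕ) :
        altLen true (x :: u.insertIdx j M) = altLen false (u.insertIdx j M) + 1 := by
      cases j
      · rw [insertIdx_zero, altLen_true_cons_cons_of_le _ hxM.le, hMu_true, hMu_false]
      · exact altLen_true_cons_cons_of_lt _ hyx
    have hhead : altLen true (M :: x :: u) = altLen false u + 1 := by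
      rw [altLen_true_cons_cons_of_lt _ hxM, altLen_false_cons_cons_of_le t hyx.le]
    have hxu : altLen true (x :: u) = altLen false u + 1 := altLen_true_cons_cons_of_lt t hyx
    have hmap : (Multiset.range (u.length + 1)).map (fun j => altLen true (x :: u.insertIdx j M))
        = (insertAltLens false M u).map (· + 1) := by
      simp only [insertAltLens, Multiset.map_map, Function.comp_def, hj]
    rw [hmap, ih false, hhead, hxu]
    exact cons_map_succ_insertProfile _ _

theorem insertAltLens_eq_insertProfile (b : Bool) {M : α} {l : List α} (hl : l.Nodup)
    (hM : ∀ x ∈ l, x < M) : insertAltLens b M l = insertProfile (altLen b l) l.length := by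
  induction l generalizing b with
  | nil => cases b <;> rfl
  | cons x u ih =>
    have hxM := hM x mem_cons_self
    rcases u with _ | ⟨y, t⟩
    · rw [insertAltLens_cons]
      cases b
      · rw [altLen_false_cons_cons_of_le _ hxM.le]
        simp [altLen_false_cons_cons_of_lt _ hxM, insertProfile]
      · rw [altLen_true_cons_cons_of_lt _ hxM]
        simpa [altLen_true_cons_cons_of_le _ hxM.le, insertProfile] using Multiset.cons_swap 2 1 0
    have hxy : x ≠ y := by simp_all
    have ih (b : Bool) := ih b hl.of_cons fun z hz => hM z (mem_cons_of_mem x hz)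
    cases b
    · exact insertAltLens_false_cons_cons hxM (hM y (by simp)) hxy ih
    · exact insertAltLens_true_cons_cons hxM (hM y (by simp)) hxy ih

end Insertion

section Perm

variable {n : ℕ}

def insertMax (σ : Equiv.Perm (Fin n)) (j : Fin (n + 1)) :
    Equiv.Perm (Fin (n + 1)) :=
  ((finSuccEquiv' j).trans (Equiv.optionCongr σ)).trans finSuccEquivLast.symm

lemma coe_insertMax (σ : Equiv.Perm (Fin n)) (j : Fin (n + 1)) :
    ⇑(insertMax σ j) = Fin.insertNth j (Fin.last n) (Fin.castSucc ∘ σ) := by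
  funext i
  cases i using Fin.succAboveCases j <;> simp [insertMax]

lemma insertMax_apply_self (σ : Equiv.Perm (Fin n)) (j : Fin (n + 1)) :
    insertMax σ j j = Fin.last n := by
  simp [coe_insertMax]

lemma ofFn_insertMax (σ : Equiv.Perm (Fin n)) (j : Fin (n + 1)) :
    ofFn (insertMax σ j) = (ofFn (Fin.castSucc ∘ σ)).insertIdx j (Fin.last n) := by
  rw [coe_insertMax, ofFn_insertNth]

lemma insertMax_bijective (n : ℕ) :
    Function.Bijective fun p : Equiv.Perm (Fin n) × Fin (n + 1) => insertMax p.1 p.2 := by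
  rw [Fintype.bijective_iff_injective_and_card]
  refine ⟨fun ⟨σ, j⟩ ⟨τ, k⟩ h => ?_,
    by simp [Fintype.card_perm, Nat.factorial_succ, mul_comm]⟩
  replace h : insertMax σ j = insertMax τ k := h
  have hjk : j = k := (insertMax σ j).injective <| by
    rw [insertMax_apply_self, h, insertMax_apply_self]
  subst hjk
  rw [← DFunLike.coe_fn_eq, coe_insertMax, coe_insertMax] at h
  have hστ : σ = τ := Equiv.ext fun i => Fin.castSucc_injective n <|
    congrFun (Fin.insertNth_injective2 h).2 i
  rw [hστ]

theorem las_eq_altLen (π : Equiv.Perm (Fin n)) : las π = altLen true (ofFn π) := by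
  refine IsGreatest.csSup_eq ⟨?_, ?_⟩
  · obtain ⟨s, hs, h, hlen⟩ := exists_altChain_sublist true (ofFn π)
    rw [ofFn_eq_map, sublist_map_iff] at hs
    obtain ⟨l, hl, rfl⟩ := hs
    exact ⟨l, sublist_finRange_iff.mp hl, by simpa using hlen, h⟩
  · rintro k ⟨l, hl, rfl, h⟩
    have hs : l.map π <+ ofFn π := ofFn_eq_map (f := π) ▸ (sublist_finRange_iff.mpr hl).map π
    simpa using length_le_altLen hs h

lemma map_las_insertMax (σ : Equiv.Perm (Fin n)) :
    Finset.univ.val.map (fun j => las (insertMax σ j)) = insertProfile (las σ) n := by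
  set L := ofFn (Fin.castSucc ∘ σ)
  have hlen : L.length = n := length_ofFn
  have hnodup : L.Nodup := nodup_ofFn.mpr ((Fin.castSucc_injective n).comp σ.injective)
  have hlt : ∀ x ∈ L, x < Fin.last n := by simp [L, mem_ofFn, Fin.castSucc_lt_last]
  have hL : altLen true L = las σ := by
    rw [las_eq_altLen, ← altLen_map_of_strictMono Fin.strictMono_castSucc true (ofFn σ),
      map_ofFn]
  have key := insertAltLens_eq_insertProfile true hnodup hlt
  rw [insertAltLens, hlen, hL] at key
  rw [← key]
  simp only [las_eq_altLen, ofFn_insertMax, Fin.univ_val_map]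
  rw [Multiset.range, Multiset.map_coe, ← map_coe_finRange_eq_range, List.map_map,
    ← ofFn_eq_map]
  rfl

lemma las_le (π : Equiv.Perm (Fin n)) : las π ≤ n := by
  simpa [las_eq_altLen] using altLen_le_length true (ofFn π)

lemma card_filter_las_insertMax (σ : Equiv.Perm (Fin n)) (k : ℤ) :
    (#{j | (las (insertMax σ j) : ℤ) = k} : ℤ) =
      (if (las σ : ℤ) = k then k else 0) + (if (las σ : ℤ) = k - 1 then 1 else 0) +
        (if (las σ : ℤ) = k - 2 then (n : ℤ) - k + 2 else 0) := by
  have hcount : #{j | (las (insertMax σ j) : ℤ) = k} =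
      ((insertProfile (las σ) n).map (Nat.cast : ℕ → ℤ)).count k := by
    rw [← map_las_insertMax, Multiset.map_map, Multiset.count_map, card_def, filter_val]
    simp_rw [eq_comm (b := k)]
    rfl
  have := las_le σ
  rw [hcount]
  simp only [insertProfile, Multiset.map_add, Multiset.map_replicate, Multiset.map_singleton,
    Nat.cast_add, Nat.cast_one, Nat.cast_ofNat, Multiset.count_add, Multiset.count_replicate,
    Multiset.count_singleton, Nat.cast_ite, Nat.cast_zero]
  split_ifs <;> omega

lemma lasCount_succ (n : ℕ) (k : ℤ) :
    lasCount (n + 1) k = ∑ σ : Equiv.Perm (Fin n), #{j | (las (insertMax σ j) : ℤ) = k} := by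
  let e := Equiv.ofBijective _ (insertMax_bijective n)
  simp only [lasCount, card_filter]
  rw [← e.sum_comp, Fintype.sum_prod_type]
  rfl

end Perm

theorem las_recurrence_general (n : ℕ) (k : ℤ) :
    (lasCount (n + 1) k : ℤ)
      = k * lasCount n k + lasCount n (k - 1) + ((n : ℤ) - k + 2) * lasCount n (k - 2) := by
  rw [lasCount_succ]
  push_cast
  simp only [card_filter_las_insertMax, sum_add_distrib, sum_ite, sum_const_zero, add_zero,
    sum_const, lasCount, nsmul_eq_mul, mul_comm]
  ring

/-- The recurrence `L_{n+1,k} = k L_{n,k} + L_{n,k-1} + (n-k+2) L_{n,k-2}`. -/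
theorem las_recurrence (n : ℕ) (hn : 1 ≤ n) (k : ℤ) (hk : 0 ≤ k) :
    (lasCount (n + 1) k : ℤ)
      = k * lasCount n k + lasCount n (k - 1) + ((n : ℤ) - k + 2) * lasCount n (k - 2) :=
  las_recurrence_general n k
end

section
/- Let J_{2n,k} be the number of fixed-point-free involutions of S_{2n} with exactly k descents. Then for all sufficiently large n, the sequence (J_{2n,k})_{k≥0} is not log-concave; that is, there exists N such that for every n ≥ N there exists k ≥ 1 with J_{2n,k}² < J_{2n,k−1} · J_{2n,k+1}. -/
open Finset

/-- The value of `π` at (0-indexed) position `j`, or `0` if `j` is out of range. -/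
def permVal {n : ℕ} (π : Equiv.Perm (Fin n)) (j : ℕ) : ℕ :=
  if h : j < n then (π ⟨j, h⟩ : ℕ) else 0

/-- The number of descents of a permutation of `n` elements: the number of positions
`i` (0-indexed, `i < n - 1`) with `π i > π (i+1)`. -/
def des {n : ℕ} (π : Equiv.Perm (Fin n)) : ℕ :=
  ((Finset.range (n - 1)).filter (fun i => permVal π (i + 1) < permVal π i)).card

/-- `J_{2n,k}`: the number of fixed-point-free involutions of `S_{2n}` with exactly `k`
descents. -/
def matchingDes (n : ℕ) (k : ℕ) : ℕ :=
  (Finset.univ.filter (fun π : Equiv.Perm (Fin (2 * n)) =>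
    π * π = 1 ∧ (∀ i, π i ≠ i) ∧ des π = k)).card

/-!
`J_{2n,1} ≥ 1`, `J_{2n,2} ≤ C(2n - 1, 2)` and `J_{2n,3} ≥ (n/6)⁵`, so log-concavity fails at `k = 2`
once `n` is large.

Lower bound: inflating the matching `4 7 10 1 8 11 2 5 12 3 6 9` of `{1, …, 12}`, which has three
descents, by increasing blocks of sizes `a b c a d e b d f c e f` (with `a + ⋯ + f = n`) gives a
matching of `{1, …, 2n}` with three descents, and its descent set together with two of its values
recovers `a, …, f`.

Upper bound: a matching with at most two descents is increasing on each of its three runs. The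
numbers of arcs between two runs form a symmetric `3 × 3` matrix with zero diagonal, hence are
determined by the run lengths; and an involution that is increasing on the blocks of a partition
into intervals is determined by these numbers. So the matching is determined by its descent set.
-/

def descentSet (m : ℕ) (g : ℕ → ℕ) : Finset ℕ :=
  (range (m - 1)).filter fun i => g (i + 1) < g i

theorem des_eq_card_descentSet {m : ℕ} (π : Equiv.Perm (Fin m)) :
    des π = #(descentSet m (permVal π)) := rfl

theorem permVal_coe {m : ℕ} (σ : Equiv.Perm (Fin m)) (i : Fin m) : permVal σ i = σ i := by
  simp [permVal]

theorem Equiv.Perm.involutive_of_mul_self_eq_one {α : Type*} {σ : Equiv.Perm α} (h : σ * σ = 1) :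
    Function.Involutive σ := fun i => by
  rw [← Equiv.Perm.mul_apply, h, Equiv.Perm.one_apply]

theorem eq_of_insert_insert_singleton_eq {x₁ x₂ x₃ y₁ y₂ y₃ : ℕ} (hx : x₁ < x₂ ∧ x₂ < x₃)
    (hy : y₁ < y₂ ∧ y₂ < y₃) (h : ({x₁, x₂, x₃} : Finset ℕ) = {y₁, y₂, y₃}) :
    x₁ = y₁ ∧ x₂ = y₂ ∧ x₃ = y₃ := by
  have hmem : ∀ x ∈ ({x₁, x₂, x₃} : Finset ℕ), x = y₁ ∨ x = y₂ ∨ x = y₃ := by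
    simp [h]
  have := hmem x₁ (by simp)
  have := hmem x₂ (by simp)
  have := hmem x₃ (by simp)
  omega

section Inflation

variable {r : ℕ} {τ w : ℕ → ℕ} {k j p : ℕ}

def blockStart (w : ℕ → ℕ) (k : ℕ) : ℕ := ∑ i ∈ range k, w i

def blockOf (r : ℕ) (w : ℕ → ℕ) (p : ℕ) : ℕ :=
  Nat.findGreatest (fun k => blockStart w k ≤ p) (r - 1)

/-- The inflation of `τ` by increasing blocks of sizes `w 0, …, w (r - 1)`: the `k`-th block of
positions is moved, in order, onto the `τ k`-th one. -/
def inflate (r : ℕ) (τ w : ℕ → ℕ) (p : ℕ) : ℕ :=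
  blockStart w (τ (blockOf r w p)) + (p - blockStart w (blockOf r w p))

theorem blockStart_succ (w : ℕ → ℕ) (k : ℕ) : blockStart w (k + 1) = blockStart w k + w k :=
  sum_range_succ w k

theorem blockStart_mono (w : ℕ → ℕ) : Monotone (blockStart w) := fun _ _ h =>
  sum_le_sum_of_subset (range_subset_range.2 h)

theorem blockStart_lt_blockStart {l : ℕ} (hpos : ∀ k < r, 0 < w k) (hkl : k < l) (hl : l ≤ r) :
    blockStart w k < blockStart w l :=
  calc blockStart w k < blockStart w (k + 1) := by
        rw [blockStart_succ]; have := hpos k (by omega); omega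
    _ ≤ blockStart w l := blockStart_mono w hkl

theorem blockOf_blockStart_add (hk : k < r) (hj : j < w k) :
    blockOf r w (blockStart w k + j) = k := by
  refine Nat.findGreatest_eq_iff.2 ⟨by omega, fun _ => by omega, fun l hkl _ hl => ?_⟩
  have := blockStart_mono w (show k + 1 ≤ l by omega)
  rw [blockStart_succ] at this
  omega

theorem exists_blockStart_add (hp : p < blockStart w r) :
    ∃ k < r, ∃ j < w k, p = blockStart w k + j := by
  set k := blockOf r w p
  have hr : 0 < r := Nat.pos_of_ne_zero fun hr => by simp [hr, blockStart] at hp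
  have hk : k ≤ r - 1 := Nat.findGreatest_le _
  have hstart : blockStart w k ≤ p := Nat.findGreatest_spec (P := fun k => blockStart w k ≤ p)
    (Nat.zero_le _) (by simp [blockStart])
  have hend : p < blockStart w (k + 1) := by
    rcases Nat.lt_or_ge k (r - 1) with hlt | hge
    · exact not_le.1 (Nat.findGreatest_is_greatest (P := fun k => blockStart w k ≤ p)
        (Nat.lt_succ_self k) hlt)
    · rwa [show k + 1 = r by omega]
  rw [blockStart_succ] at hend
  exact ⟨k, by omega, p - blockStart w k, by omega, by omega⟩

theorem inflate_blockStart_add (hk : k < r) (hj : j < w k) :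
    inflate r τ w (blockStart w k + j) = blockStart w (τ k) + j := by
  simp [inflate, blockOf_blockStart_add hk hj]

theorem inflate_blockStart_succ_sub_one (hk : k < r) (hpos : 0 < w k) (hw : w (τ k) = w k) :
    inflate r τ w (blockStart w (k + 1) - 1) = blockStart w (τ k + 1) - 1 := by
  rw [blockStart_succ, blockStart_succ, hw, Nat.add_sub_assoc hpos,
    inflate_blockStart_add hk (by omega), Nat.add_sub_assoc hpos]

theorem blockStart_eq_of_inflate_eq {w' : ℕ → ℕ} (hk : k < r) (hpos : 0 < w k) (hpos' : 0 < w' k)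
    (hw : w (τ k) = w k) (hw' : w' (τ k) = w' k)
    (hend : blockStart w (k + 1) = blockStart w' (k + 1))
    (hval : inflate r τ w (blockStart w (k + 1) - 1) = inflate r τ w' (blockStart w (k + 1) - 1)) :
    blockStart w (τ k + 1) = blockStart w' (τ k + 1) := by
  rw [inflate_blockStart_succ_sub_one hk hpos hw, hend,
    inflate_blockStart_succ_sub_one hk hpos' hw'] at hval
  have := blockStart_succ w (τ k)
  have := blockStart_succ w' (τ k)
  omega

theorem exists_of_mem_descentSet_inflate (hw : ∀ k < r, w (τ k) = w k)
    (hinj : ∀ k < r, ∀ l < r, τ k = τ l → k = l)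
    (hpos : ∀ k < r, 0 < w k) (hp : p ∈ descentSet (blockStart w r) (inflate r τ w)) :
    ∃ k ∈ descentSet r τ, blockStart w (k + 1) - 1 = p := by
  simp only [descentSet, mem_filter, mem_range] at hp ⊢
  obtain ⟨hp, hdesc⟩ := hp
  obtain ⟨k, hk, j, hj, rfl⟩ := exists_blockStart_add (show p < blockStart w r by omega)
  rw [inflate_blockStart_add hk hj] at hdesc
  have hjk : j + 1 = w k := by
    by_contra hne
    rw [add_assoc, inflate_blockStart_add hk (by omega)] at hdesc
    omega
  have hnext : blockStart w k + j + 1 = blockStart w (k + 1) + 0 := by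
    rw [blockStart_succ]; omega
  have hk1 : k + 1 < r := by
    by_contra hge
    have := blockStart_mono w (show r ≤ k + 1 by omega)
    omega
  rw [hnext, inflate_blockStart_add hk1 (hpos _ hk1)] at hdesc
  refine ⟨k, ⟨by omega, ?_⟩, by omega⟩
  by_contra hge
  have hne : τ (k + 1) ≠ τ k := fun h => by have := hinj _ hk1 _ hk h; omega
  have := blockStart_mono w (show τ k + 1 ≤ τ (k + 1) by omega)
  rw [blockStart_succ, hw k hk] at this
  omega

theorem blockStart_succ_sub_one_mem_descentSet_inflate (hτ : ∀ k < r, τ k < r)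
    (hpos : ∀ k < r, 0 < w k)
    (hk : k ∈ descentSet r τ) :
    blockStart w (k + 1) - 1 ∈ descentSet (blockStart w r) (inflate r τ w) := by
  simp only [descentSet, mem_filter, mem_range] at hk ⊢
  obtain ⟨hk, hdesc⟩ := hk
  have hk1 : k + 1 < r := by omega
  have hwk := hpos k (by omega)
  have hnext := blockStart_lt_blockStart hpos (show k + 1 < k + 2 by omega)
    (show k + 2 ≤ r by omega)
  have hlast := blockStart_mono w (show k + 2 ≤ r by omega)
  have hτlt := blockStart_lt_blockStart hpos hdesc (hτ k (by omega)).le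
  have hsucc := blockStart_succ w k
  have hprev : blockStart w (k + 1) - 1 = blockStart w k + (w k - 1) := by omega
  refine ⟨by omega, ?_⟩
  rw [show blockStart w (k + 1) - 1 + 1 = blockStart w (k + 1) + 0 by omega,
    inflate_blockStart_add hk1 (hpos _ hk1), hprev,
    inflate_blockStart_add (by omega) (by omega)]
  omega

variable (hτ : ∀ k < r, τ k < r) (hw : ∀ k < r, w (τ k) = w k)
include hτ hw

theorem inflate_lt (hp : p < blockStart w r) : inflate r τ w p < blockStart w r := by
  obtain ⟨k, hk, j, hj, rfl⟩ := exists_blockStart_add hp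
  rw [inflate_blockStart_add hk hj]
  calc blockStart w (τ k) + j < blockStart w (τ k + 1) := by
        rw [blockStart_succ, hw k hk]; omega
    _ ≤ blockStart w r := blockStart_mono w (hτ k hk)

theorem inflate_inflate (hinv : ∀ k < r, τ (τ k) = k) (hp : p < blockStart w r) :
    inflate r τ w (inflate r τ w p) = p := by
  obtain ⟨k, hk, j, hj, rfl⟩ := exists_blockStart_add hp
  rw [inflate_blockStart_add hk hj, inflate_blockStart_add (hτ k hk) (by rwa [hw k hk]),
    hinv k hk]

theorem inflate_ne (hfix : ∀ k < r, τ k ≠ k) (hp : p < blockStart w r) :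
    inflate r τ w p ≠ p := by
  obtain ⟨k, hk, j, hj, rfl⟩ := exists_blockStart_add hp
  intro h
  rw [inflate_blockStart_add hk hj] at h
  have := congrArg (blockOf r w) h
  rw [blockOf_blockStart_add hk hj, blockOf_blockStart_add (hτ k hk) (by rwa [hw k hk])] at this
  exact hfix k hk this

theorem descentSet_inflate (hinj : ∀ k < r, ∀ l < r, τ k = τ l → k = l)
    (hpos : ∀ k < r, 0 < w k) :
    descentSet (blockStart w r) (inflate r τ w) =
      (descentSet r τ).image fun k => blockStart w (k + 1) - 1 := by
  ext p
  rw [mem_image]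
  refine ⟨exists_of_mem_descentSet_inflate hw hinj hpos, ?_⟩
  rintro ⟨k, hk, rfl⟩
  exact blockStart_succ_sub_one_mem_descentSet_inflate hτ hpos hk

variable (hinv : ∀ k < r, τ (τ k) = k)
include hinv

theorem inflate_involution (hp : p < blockStart w r) :
    inflate r τ w p < blockStart w r ∧ inflate r τ w (inflate r τ w p) = p :=
  ⟨inflate_lt hτ hw hp, inflate_inflate hτ hw hinv hp⟩

theorem card_descentSet_inflate (hpos : ∀ k < r, 0 < w k) :
    #(descentSet (blockStart w r) (inflate r τ w)) = #(descentSet r τ) := by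
  have hinj : ∀ k < r, ∀ l < r, τ k = τ l → k = l := fun k hk l hl h => by
    rw [← hinv k hk, h, hinv l hl]
  rw [descentSet_inflate hτ hw hinj hpos, card_image_of_injOn]
  refine StrictMonoOn.injOn fun k hk l hl hkl => ?_
  simp only [mem_coe, descentSet, mem_filter, mem_range] at hk hl
  have := blockStart_lt_blockStart hpos (show k + 1 < l + 1 by omega) (show l + 1 ≤ r by omega)
  have := blockStart_succ w k
  have := hpos k (by omega)
  omega

end Inflation

/-- The permutation of `Fin m` induced by `g` when `g` restricts to an involution of
`{0, …, m - 1}`, and the identity otherwise. -/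
def involutionOfNat (m : ℕ) (g : ℕ → ℕ) : Equiv.Perm (Fin m) :=
  if h : ∀ i < m, g i < m ∧ g (g i) = i then
    { toFun := fun i => ⟨g i, (h i i.2).1⟩
      invFun := fun i => ⟨g i, (h i i.2).1⟩
      left_inv := fun i => Fin.ext (h i i.2).2
      right_inv := fun i => Fin.ext (h i i.2).2 }
  else 1

section involutionOfNat

variable {m : ℕ} {g : ℕ → ℕ} (hg : ∀ i < m, g i < m ∧ g (g i) = i)
include hg

theorem involutionOfNat_apply (i : Fin m) : (involutionOfNat m g i : ℕ) = g i := by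
  rw [involutionOfNat, dif_pos hg]
  rfl

theorem involutionOfNat_mul_self : involutionOfNat m g * involutionOfNat m g = 1 :=
  Equiv.ext fun i => Fin.ext <| by
    simp only [Equiv.Perm.mul_apply, involutionOfNat_apply hg, (hg i i.2).2, Equiv.Perm.one_apply]

theorem permVal_involutionOfNat {j : ℕ} (hj : j < m) :
    permVal (involutionOfNat m g) j = g j := by
  simp [permVal, hj, involutionOfNat_apply hg]

theorem descentSet_permVal_involutionOfNat :
    descentSet m (permVal (involutionOfNat m g)) = descentSet m g :=
  filter_congr fun i hi => by
    rw [mem_range] at hi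
    rw [permVal_involutionOfNat hg (by omega), permVal_involutionOfNat hg (by omega)]

end involutionOfNat

def matchings (n k : ℕ) : Finset (Equiv.Perm (Fin (2 * n))) :=
  {π | π * π = 1 ∧ (∀ i, π i ≠ i) ∧ des π = k}

theorem matchingDes_eq_card (n k : ℕ) : matchingDes n k = #(matchings n k) := rfl

theorem mem_matchings {n k : ℕ} {π : Equiv.Perm (Fin (2 * n))} :
    π ∈ matchings n k ↔ π * π = 1 ∧ (∀ i, π i ≠ i) ∧ des π = k := by
  simp [matchings]

theorem involutionOfNat_mem_matchings {n : ℕ} {g : ℕ → ℕ}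
    (hg : ∀ i < 2 * n, g i < 2 * n ∧ g (g i) = i) (hfix : ∀ i < 2 * n, g i ≠ i) :
    involutionOfNat (2 * n) g ∈ matchings n #(descentSet (2 * n) g) := by
  refine mem_matchings.2 ⟨involutionOfNat_mul_self hg, fun i h => hfix i i.2 ?_, ?_⟩
  · rw [← involutionOfNat_apply hg, h]
  · rw [des_eq_card_descentSet, descentSet_permVal_involutionOfNat hg]

theorem inflate_mem_matchings {n r : ℕ} {τ w : ℕ → ℕ} (hτ : ∀ k < r, τ k < r)
    (hinv : ∀ k < r, τ (τ k) = k) (hfix : ∀ k < r, τ k ≠ k) (hw : ∀ k < r, w (τ k) = w k)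
    (hpos : ∀ k < r, 0 < w k) (hS : blockStart w r = 2 * n) :
    involutionOfNat (2 * n) (inflate r τ w) ∈ matchings n #(descentSet r τ) := by
  rw [← card_descentSet_inflate hτ hw hinv hpos, hS]
  refine involutionOfNat_mem_matchings (fun i hi => ?_) fun i hi => ?_
  · rw [← hS] at hi ⊢
    exact inflate_involution hτ hw hinv hi
  · exact inflate_ne hτ hw hfix (hS ▸ hi)

theorem one_le_matchingDes_one {n : ℕ} (hn : 0 < n) : 1 ≤ matchingDes n 1 :=
  card_pos.2 ⟨_, inflate_mem_matchings (r := 2) (τ := fun k => 1 - k) (w := fun _ => n)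
    (fun k hk => by omega) (fun k hk => by omega) (fun k hk => by omega) (fun _ _ => rfl)
    (fun _ _ => hn) (by simp [blockStart, two_mul])⟩

def baseMatching (k : ℕ) : ℕ := [3, 6, 9, 0, 7, 10, 1, 4, 11, 2, 5, 8].getD k 0

def blockSizes (a b c d e f k : ℕ) : ℕ := [a, b, c, a, d, e, b, d, f, c, e, f].getD k 0

theorem baseMatching_lt : ∀ k < 12, baseMatching k < 12 := by decide

theorem baseMatching_baseMatching : ∀ k < 12, baseMatching (baseMatching k) = k := by decide

theorem baseMatching_ne : ∀ k < 12, baseMatching k ≠ k := by decide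

theorem baseMatching_injOn : ∀ k < 12, ∀ l < 12, baseMatching k = baseMatching l → k = l := by
  decide

theorem descentSet_baseMatching : descentSet 12 baseMatching = {2, 5, 8} := by decide

theorem blockSizes_baseMatching (a b c d e f : ℕ) :
    ∀ k < 12, blockSizes a b c d e f (baseMatching k) = blockSizes a b c d e f k := by
  intro k hk
  interval_cases k <;> rfl

theorem blockSizes_pos {a b c d e f : ℕ} (ha : 0 < a) (hb : 0 < b) (hc : 0 < c) (hd : 0 < d)
    (he : 0 < e) (hf : 0 < f) : ∀ k < 12, 0 < blockSizes a b c d e f k := by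
  intro k hk
  interval_cases k <;> assumption

section ThreeDescents

variable {n a b c d e a' b' c' d' e' : ℕ}

abbrev threeDescentSizes (n a b c d e : ℕ) : ℕ → ℕ :=
  blockSizes a b c d e (n - (a + b + c + d + e))

def threeDescentMatching (n a b c d e : ℕ) : Equiv.Perm (Fin (2 * n)) :=
  involutionOfNat (2 * n) (inflate 12 baseMatching (threeDescentSizes n a b c d e))

theorem blockStart_threeDescentSizes (h : a + b + c + d + e ≤ n) :
    blockStart (threeDescentSizes n a b c d e) 12 = 2 * n := by
  simp [blockStart, sum_range_succ, blockSizes]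
  omega

theorem inflate_threeDescentSizes_involution (h : a + b + c + d + e ≤ n) :
    ∀ i < 2 * n, inflate 12 baseMatching (threeDescentSizes n a b c d e) i < 2 * n ∧
      inflate 12 baseMatching (threeDescentSizes n a b c d e)
        (inflate 12 baseMatching (threeDescentSizes n a b c d e) i) = i := by
  rw [← blockStart_threeDescentSizes h]
  exact fun i hi => inflate_involution baseMatching_lt (blockSizes_baseMatching _ _ _ _ _ _)
    baseMatching_baseMatching hi

theorem permVal_threeDescentMatching (h : a + b + c + d + e ≤ n) {j : ℕ} (hj : j < 2 * n) :
    permVal (threeDescentMatching n a b c d e) j =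
      inflate 12 baseMatching (threeDescentSizes n a b c d e) j :=
  permVal_involutionOfNat (inflate_threeDescentSizes_involution h) hj

theorem threeDescentMatching_mem (ha : 0 < a) (hb : 0 < b) (hc : 0 < c) (hd : 0 < d) (he : 0 < e)
    (hn : a + b + c + d + e < n) : threeDescentMatching n a b c d e ∈ matchings n 3 := by
  have hmem := inflate_mem_matchings baseMatching_lt baseMatching_baseMatching baseMatching_ne
    (blockSizes_baseMatching _ _ _ _ _ _) (blockSizes_pos ha hb hc hd he (by omega))
    (blockStart_threeDescentSizes hn.le)
  rwa [descentSet_baseMatching, show #({2, 5, 8} : Finset ℕ) = 3 by decide] at hmem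

theorem descentSet_threeDescentMatching (ha : 0 < a) (hb : 0 < b) (hc : 0 < c) (hd : 0 < d)
    (he : 0 < e) (hn : a + b + c + d + e < n) :
    descentSet (2 * n) (permVal (threeDescentMatching n a b c d e)) =
      {blockStart (threeDescentSizes n a b c d e) 3 - 1,
        blockStart (threeDescentSizes n a b c d e) 6 - 1,
        blockStart (threeDescentSizes n a b c d e) 9 - 1} := by
  rw [threeDescentMatching,
    descentSet_permVal_involutionOfNat (inflate_threeDescentSizes_involution hn.le),
    ← blockStart_threeDescentSizes hn.le, descentSet_inflate baseMatching_lt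
      (blockSizes_baseMatching _ _ _ _ _ _) baseMatching_injOn
      (blockSizes_pos ha hb hc hd he (by omega)), descentSet_baseMatching]
  simp

theorem eq_of_threeDescentMatching_eq (ha : 0 < a) (hb : 0 < b) (hc : 0 < c) (hd : 0 < d)
    (he : 0 < e) (hn : a + b + c + d + e < n) (ha' : 0 < a') (hb' : 0 < b') (hc' : 0 < c')
    (hd' : 0 < d') (he' : 0 < e') (hn' : a' + b' + c' + d' + e' < n)
    (h : threeDescentMatching n a b c d e = threeDescentMatching n a' b' c' d' e') :
    a = a' ∧ b = b' ∧ c = c' ∧ d = d' ∧ e = e' := by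
  have hD := congrArg (fun π => descentSet (2 * n) (permVal π)) h
  simp only [descentSet_threeDescentMatching ha hb hc hd he hn,
    descentSet_threeDescentMatching ha' hb' hc' hd' he' hn'] at hD
  obtain ⟨h3, h6, h9⟩ := eq_of_insert_insert_singleton_eq
    (by simp [blockStart, sum_range_succ, blockSizes]; omega)
    (by simp [blockStart, sum_range_succ, blockSizes]; omega) hD
  set w := threeDescentSizes n a b c d e
  set w' := threeDescentSizes n a' b' c' d' e'
  have hpos : ∀ k < 12, 0 < w k := blockSizes_pos ha hb hc hd he (by omega)
  have hpos' : ∀ k < 12, 0 < w' k := blockSizes_pos ha' hb' hc' hd' he' (by omega)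
  have hS : blockStart w 12 = 2 * n := blockStart_threeDescentSizes hn.le
  have hend (k : ℕ) (hk : k < 12) (hk' : blockStart w (k + 1) = blockStart w' (k + 1)) :
      blockStart w (baseMatching k + 1) = blockStart w' (baseMatching k + 1) := by
    have := blockStart_mono w (show k + 1 ≤ 12 by omega)
    have := blockStart_succ w k
    have := hpos k hk
    refine blockStart_eq_of_inflate_eq hk (hpos k hk) (hpos' k hk)
      (blockSizes_baseMatching _ _ _ _ _ _ k hk) (blockSizes_baseMatching _ _ _ _ _ _ k hk) hk' ?_
    rw [← permVal_threeDescentMatching hn.le (by omega), h,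
      permVal_threeDescentMatching hn'.le (by omega)]
  have e3 : blockStart w 3 = blockStart w' 3 := by
    simp [w, w', blockStart, sum_range_succ, blockSizes] at h3 ⊢; omega
  have e6 : blockStart w 6 = blockStart w' 6 := by
    simp [w, w', blockStart, sum_range_succ, blockSizes] at h6 ⊢; omega
  have h10 := hend 2 (by norm_num) e3
  have h11 := hend 5 (by norm_num) e6
  simp [w, w', blockStart, sum_range_succ, blockSizes, baseMatching] at h9 e3 e6 h10 h11
  omega

end ThreeDescents

theorem pow_le_matchingDes_three (n : ℕ) : (n / 6) ^ 5 ≤ matchingDes n 3 := by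
  set M := n / 6
  let box := Icc 1 M ×ˢ Icc 1 M ×ˢ Icc 1 M ×ˢ Icc 1 M ×ˢ Icc 1 M
  have hbox : #box = M ^ 5 := by simp [box]; ring
  rw [matchingDes_eq_card, ← hbox]
  refine card_le_card_of_injOn
    (fun x => threeDescentMatching n x.1 x.2.1 x.2.2.1 x.2.2.2.1 x.2.2.2.2) ?_ ?_
  · rintro ⟨a, b, c, d, e⟩ hx
    simp only [box, coe_product, Set.mem_prod, coe_Icc, Set.mem_Icc] at hx
    show threeDescentMatching n a b c d e ∈ matchings n 3
    exact threeDescentMatching_mem (by omega) (by omega) (by omega) (by omega) (by omega)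
      (by omega)
  · rintro ⟨a, b, c, d, e⟩ hx ⟨a', b', c', d', e'⟩ hx' h
    simp only [box, coe_product, Set.mem_prod, coe_Icc, Set.mem_Icc] at hx hx'
    dsimp only at h
    obtain ⟨rfl, rfl, rfl, rfl, rfl⟩ := eq_of_threeDescentMatching_eq (by omega) (by omega)
      (by omega) (by omega) (by omega) (by omega) (by omega) (by omega) (by omega) (by omega)
      (by omega) (by omega) h
    rfl

section Fibers

variable {m : ℕ} (blk : Fin m → ℕ) {σ τ : Equiv.Perm (Fin m)}

def StrictMonoOnFibers (σ : Equiv.Perm (Fin m)) : Prop :=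
  ∀ ⦃i j⦄, blk i = blk j → i < j → σ i < σ j

def transitionCount (σ : Equiv.Perm (Fin m)) (s t : ℕ) : ℕ :=
  #{i | blk i = s ∧ blk (σ i) = t}

variable {blk}

theorem StrictMonoOnFibers.eq_of_comp_eq (hσm : StrictMonoOnFibers blk σ)
    (hτm : StrictMonoOnFibers blk τ) (hσ : Function.Involutive σ) (hτ : Function.Involutive τ)
    (h : blk ∘ σ = blk ∘ τ) : σ = τ := by
  refine Equiv.ext fun i => ?_
  induction i using WellFoundedLT.induction with
  | _ i ih =>
  by_contra hne
  wlog hlt : σ i < τ i generalizing σ τ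
  · exact this hτm hσm hτ hσ h.symm (fun j hj => (ih j hj).symm) (Ne.symm hne)
      (lt_of_le_of_ne (not_lt.1 hlt) (Ne.symm hne))
  -- the partner `τ (σ i)` of `σ i` lies after `i`, in the fiber of `i`
  have hi : i < τ (σ i) := by
    rcases lt_trichotomy (τ (σ i)) i with hj | hj | hj
    · have := ih _ hj
      rw [hτ] at this
      exact absurd (σ.injective this) hj.ne
    · exact absurd ((hτ (σ i)).symm.trans (congrArg τ hj)) hne
    · exact hj
  have hfib : blk i = blk (τ (σ i)) := by simpa [hσ i] using congrFun h (σ i)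
  have := hτm hfib hi
  rw [hτ] at this
  exact lt_asymm hlt this

theorem transitionCount_comm (hσ : Function.Involutive σ) (s t : ℕ) :
    transitionCount blk σ s t = transitionCount blk σ t s :=
  card_nbij' σ σ (fun i hi => by simp_all [hσ i]) (fun i hi => by simp_all [hσ i])
    (fun i _ => hσ i) (fun i _ => hσ i)

theorem transitionCount_self (hσ : Function.Involutive σ) (hfix : ∀ i, σ i ≠ i)
    (hσm : StrictMonoOnFibers blk σ) (s : ℕ) : transitionCount blk σ s s = 0 := by
  refine card_eq_zero.2 (filter_eq_empty_iff.2 fun i _ ⟨hi, hσi⟩ => ?_)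
  rcases lt_or_gt_of_ne (hfix i) with hlt | hlt
  · have := hσm (hσi.trans hi.symm) hlt
    rw [hσ] at this
    exact lt_asymm hlt this
  · have := hσm (hi.trans hσi.symm) hlt
    rw [hσ] at this
    exact lt_asymm hlt this

theorem transitionCount_eq_zero_of_le {r s t : ℕ} (hblk : ∀ i, blk i < r) (h : r ≤ s ∨ r ≤ t) :
    transitionCount blk σ s t = 0 :=
  card_eq_zero.2 <| filter_eq_empty_iff.2 fun i _ ⟨hs, ht⟩ => by
    have := hblk i
    have := hblk (σ i)
    omega

theorem sum_transitionCount {r : ℕ} (hblk : ∀ i, blk i < r) (s : ℕ) :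
    ∑ t ∈ range r, transitionCount blk σ s t = #{i | blk i = s} := by
  rw [card_eq_sum_card_fiberwise (f := fun i => blk (σ i)) (t := range r)
    (fun i _ => mem_range.2 (hblk _))]
  simp [transitionCount, filter_filter]

theorem card_filter_comp_lt (s t : ℕ) :
    #{i | blk i = s ∧ blk (σ i) < t} = ∑ t' ∈ range t, transitionCount blk σ s t' := by
  rw [card_eq_sum_card_fiberwise (f := fun i => blk (σ i)) (t := range t)
    (fun i hi => by simp_all)]
  refine sum_congr rfl fun t' ht' => ?_
  rw [transitionCount, filter_filter]
  refine congrArg card (filter_congr fun i _ => ?_)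
  rw [mem_range] at ht'
  exact ⟨fun ⟨⟨h1, _⟩, h2⟩ => ⟨h1, h2⟩, fun ⟨h1, h2⟩ => ⟨⟨h1, h2 ▸ ht'⟩, h2⟩⟩

/-- Within a fiber, `blk ∘ σ` is monotone, so the counts `#{i | blk i = s ∧ blk (σ i) < t}`
determine it. -/
theorem StrictMonoOnFibers.comp_eq_of_transitionCount_eq (hblk : Monotone blk)
    (hσm : StrictMonoOnFibers blk σ) (hτm : StrictMonoOnFibers blk τ)
    (h : ∀ s t, transitionCount blk σ s t = transitionCount blk τ s t) : blk ∘ σ = blk ∘ τ := by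
  funext i
  by_contra hne
  wlog hlt : blk (σ i) < blk (τ i) generalizing σ τ
  · exact this hτm hσm (fun s t => (h s t).symm) (Ne.symm hne)
      (lt_of_le_of_ne (not_lt.1 hlt) (Ne.symm hne))
  have hsub : ({i' | blk i' = blk i ∧ blk (τ i') < blk (τ i)} : Finset (Fin m)) ⊂
      ({i' | blk i' = blk i ∧ blk (σ i') < blk (τ i)} : Finset (Fin m)) := by
    refine ssubset_iff_of_subset (fun i' hi' => ?_) |>.2 ⟨i, by simp [hlt], by simp⟩
    simp only [mem_filter, mem_univ, true_and] at hi' ⊢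
    have hi'i : i' < i := by
      by_contra hge
      rcases (not_lt.1 hge).lt_or_eq with hgt | rfl
      · exact absurd (hblk (hτm hi'.1.symm hgt).le) (not_le.2 hi'.2)
      · exact lt_irrefl _ hi'.2
    exact ⟨hi'.1, (hblk (hσm hi'.1 hi'i).le).trans_lt hlt⟩
  have := card_lt_card hsub
  rw [card_filter_comp_lt, card_filter_comp_lt] at this
  simp only [h] at this
  exact lt_irrefl _ this

theorem transitionCount_eq_of_forall_lt_three (hσ : Function.Involutive σ)
    (hτ : Function.Involutive τ) (hσfix : ∀ i, σ i ≠ i) (hτfix : ∀ i, τ i ≠ i)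
    (hσm : StrictMonoOnFibers blk σ) (hτm : StrictMonoOnFibers blk τ) (hblk : ∀ i, blk i < 3)
    (s t : ℕ) : transitionCount blk σ s t = transitionCount blk τ s t := by
  rcases Nat.lt_or_ge s 3 with hs | hs
  swap
  · rw [transitionCount_eq_zero_of_le hblk (.inl hs), transitionCount_eq_zero_of_le hblk (.inl hs)]
  rcases Nat.lt_or_ge t 3 with ht | ht
  swap
  · rw [transitionCount_eq_zero_of_le hblk (.inr ht), transitionCount_eq_zero_of_le hblk (.inr ht)]
  have row (ρ : Equiv.Perm (Fin m)) (s : ℕ) : transitionCount blk ρ s 0 +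
      transitionCount blk ρ s 1 + transitionCount blk ρ s 2 = #{i | blk i = s} := by
    simpa [sum_range_succ] using sum_transitionCount (σ := ρ) hblk s
  have := row σ 0; have := row σ 1; have := row σ 2
  have := row τ 0; have := row τ 1; have := row τ 2
  -- a symmetric `3 × 3` matrix with zero diagonal is determined by its row sums
  interval_cases s <;> interval_cases t <;>
    simp only [transitionCount_self hσ hσfix hσm, transitionCount_self hτ hτfix hτm,
      transitionCount_comm hσ 1 0, transitionCount_comm hσ 2 0, transitionCount_comm hσ 2 1,
      transitionCount_comm hτ 1 0, transitionCount_comm hτ 2 0, transitionCount_comm hτ 2 1]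
      at * <;> omega

end Fibers

def runIndex (D : Finset ℕ) (i : ℕ) : ℕ := #{d ∈ D | d < i}

theorem runIndex_mono (D : Finset ℕ) : Monotone (runIndex D) := fun _ _ hij =>
  card_le_card (monotone_filter_right D fun _ _ hd => lt_of_lt_of_le hd hij)

theorem runIndex_le_card (D : Finset ℕ) (i : ℕ) : runIndex D i ≤ #D := card_filter_le _ _

theorem notMem_of_runIndex_eq {D : Finset ℕ} {i j d : ℕ} (h : runIndex D i = runIndex D j)
    (hid : i ≤ d) (hdj : d < j) : d ∉ D := fun hd => by
  have hsub : {d ∈ D | d < i} ⊂ {d ∈ D | d < j} :=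
    ssubset_iff_of_subset (monotone_filter_right D fun _ _ h => by omega) |>.2
      ⟨d, by simp [hd, hdj], by simp [hid]⟩
  exact (card_lt_card hsub).ne h

theorem strictMonoOnFibers_runIndex {m : ℕ} (σ : Equiv.Perm (Fin m)) :
    StrictMonoOnFibers (fun i => runIndex (descentSet m (permVal σ)) i) σ := by
  intro i j hij hlt
  have hmono : StrictMonoOn (permVal σ) (Set.Icc (i : ℕ) j) := by
    refine strictMonoOn_of_lt_succ Set.ordConnected_Icc fun a _ ha ha1 => ?_
    rw [Order.succ_eq_add_one] at ha1 ⊢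
    have ha1j : a + 1 ≤ j := ha1.2
    have hnd := notMem_of_runIndex_eq hij ha.1 (by omega)
    simp only [descentSet, mem_filter, mem_range, not_and, not_lt] at hnd
    have hne : permVal σ a ≠ permVal σ (a + 1) := by
      have h1 : a < m := by omega
      have h2 : a + 1 < m := by omega
      simp only [permVal, h1, h2, dif_pos, ne_eq, Fin.val_inj, EmbeddingLike.apply_eq_iff_eq,
        Fin.mk.injEq]
      omega
    exact lt_of_le_of_ne (hnd (by omega)) hne
  simpa [permVal_coe] using hmono ⟨le_rfl, hlt.le⟩ ⟨hlt.le, le_rfl⟩ hlt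

theorem eq_of_descentSet_eq {m : ℕ} {σ τ : Equiv.Perm (Fin m)} (hσ : σ * σ = 1)
    (hτ : τ * τ = 1) (hσfix : ∀ i, σ i ≠ i) (hτfix : ∀ i, τ i ≠ i)
    (hD : descentSet m (permVal σ) = descentSet m (permVal τ)) (hdes : des σ ≤ 2) : σ = τ := by
  set blk : Fin m → ℕ := fun i => runIndex (descentSet m (permVal σ)) i
  have hσm : StrictMonoOnFibers blk σ := strictMonoOnFibers_runIndex σ
  have hτm : StrictMonoOnFibers blk τ := by
    simpa only [blk, hD] using strictMonoOnFibers_runIndex τ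
  have hblk : ∀ i, blk i < 3 := fun i =>
    (runIndex_le_card _ _).trans_lt (Nat.lt_succ_of_le hdes)
  have hσi := Equiv.Perm.involutive_of_mul_self_eq_one hσ
  have hτi := Equiv.Perm.involutive_of_mul_self_eq_one hτ
  exact hσm.eq_of_comp_eq hτm hσi hτi <|
    hσm.comp_eq_of_transitionCount_eq (fun i j hij => runIndex_mono _ hij) hτm <|
      transitionCount_eq_of_forall_lt_three hσi hτi hσfix hτfix hσm hτm hblk

theorem matchingDes_two_le (n : ℕ) : matchingDes n 2 ≤ (2 * n - 1).choose 2 := by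
  rw [matchingDes_eq_card, ← card_range (2 * n - 1), ← card_powersetCard]
  refine card_le_card_of_injOn (fun π => descentSet (2 * n) (permVal π)) (fun π hπ => ?_)
    fun π hπ τ hτ h => ?_
  · rw [mem_coe, mem_matchings] at hπ
    exact mem_powersetCard.2 ⟨filter_subset _ _, hπ.2.2⟩
  · rw [mem_coe, mem_matchings] at hπ hτ
    exact eq_of_descentSet_eq hπ.1 hτ.1 hπ.2.1 hτ.2.1 h hπ.2.2.le

/-- For all sufficiently large `n`, the sequence `(J_{2n,k})_k` of descent counts of
fixed-point-free involutions is not log-concave. -/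
theorem matchings_descents_not_log_concave :
    ∃ N : ℕ, ∀ n : ℕ, N ≤ n → ∃ k : ℕ, 1 ≤ k ∧
      matchingDes n k ^ 2 < matchingDes n (k - 1) * matchingDes n (k + 1) := by
  refine ⟨240000, fun n hn => ⟨2, by norm_num, ?_⟩⟩
  have h2 : matchingDes n 2 ≤ (2 * n) ^ 2 := (matchingDes_two_le n).trans
    ((Nat.choose_le_pow _ _).trans (Nat.pow_le_pow_left (by omega) 2))
  have hgrowth : ((2 * n) ^ 2) ^ 2 < (n / 6) ^ 5 := by
    obtain ⟨q, hq⟩ : ∃ q, n / 6 = q := ⟨_, rfl⟩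
    calc ((2 * n) ^ 2) ^ 2 ≤ ((2 * (7 * q)) ^ 2) ^ 2 := by gcongr; omega
      _ = 38416 * q ^ 4 := by ring
      _ < q * q ^ 4 := Nat.mul_lt_mul_of_pos_right (by omega) (pow_pos (by omega) 4)
      _ = (n / 6) ^ 5 := by rw [hq]; ring
  calc matchingDes n 2 ^ 2 ≤ ((2 * n) ^ 2) ^ 2 := Nat.pow_le_pow_left h2 2
    _ < (n / 6) ^ 5 := hgrowth
    _ ≤ matchingDes n 3 := pow_le_matchingDes_three n
    _ ≤ matchingDes n (2 - 1) * matchingDes n (2 + 1) :=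
      Nat.le_mul_of_pos_left _ (one_le_matchingDes_one (by omega))
end

section
/- For a uniformly random permutation π of S_n (n ≥ 2), let D_n = des(π) and D'_n = des(π⁻¹). Then the covariance of D_n and D'_n equals (n−1)/(2n); that is, (1/n!) Σ_{π ∈ S_n} des(π)·des(π⁻¹) − ((n−1)/2)² = (n−1)/(2n). -/
open Finset

/-!
Expanding `des π = ∑ i, [π (i+1) < π i]` and `des π⁻¹ = ∑ j, [π⁻¹ (j+1) < π⁻¹ j]`, the
sum `∑ π, des π * des π⁻¹` counts, for each of the `(n-1)²` pairs `(i, j)`, the permutations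
with a descent at `i` and an inverse descent at `j`; there are `(n! + 2 (n-2)!) / 4` of them.
Left multiplication by the transposition `(j j+1)` toggles the inverse descent, so half of all
permutations have it. Right multiplication by `(i i+1)` toggles the descent at `i` and keeps the
inverse descent, except when `π` maps `i, i+1` onto `j+1, j`: these `(n-2)!` permutations have
both. The covariance is then `(n-1)² (n! + 2 (n-2)!) / (4 n!) - (n-1)² / 4 = (n-1) / (2n)`.
-/

open Equiv Nat

lemma two_mul_card_filter_of_involutive {α : Type*} {s : Finset α} {f : α → α}
    (hf : Function.Involutive f) (hs : ∀ x ∈ s, f x ∈ s) (p : α → Prop) [DecidablePred p]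
    (hp : ∀ x ∈ s, p (f x) ↔ ¬ p x) :
    2 * #(s.filter p) = #s := by
  have htoggle : #(s.filter p) = #(s.filter fun x => ¬ p x) := by
    refine card_nbij' f f ?_ ?_ (fun x _ => hf x) (fun x _ => hf x) <;>
      intro x hx <;> simp only [coe_filter, Set.mem_ofPred_eq] at hx ⊢
    · exact ⟨hs x hx.1, by rw [hp x hx.1, not_not]; exact hx.2⟩
    · exact ⟨hs x hx.1, (hp x hx.1).2 hx.2⟩
  have hsplit := card_filter_add_card_filter_not (s := s) p
  omega

lemma swap_apply_lt_swap_apply_iff {α : Type*} [LinearOrder α] [DecidableEq α] {a b x y : α}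
    (hab : a ⋖ b) (hxy : ¬(x = a ∧ y = b)) (hyx : ¬(x = b ∧ y = a)) :
    swap a b x < swap a b y ↔ x < y := by
  have := hab.lt
  have h₁ : ∀ {z}, a < z → b ≤ z := hab.ge_of_gt
  have h₂ : ∀ {z}, z < b → z ≤ a := hab.le_of_lt
  simp only [swap_apply_def]
  split_ifs <;> grind

lemma exists_perm_apply_eq_and_apply_eq {α : Type*} [DecidableEq α] {a b c d : α}
    (hab : a ≠ b) (hcd : c ≠ d) : ∃ g : Perm α, g a = c ∧ g b = d := by
  have hb : swap a c b ≠ c := fun h => hab ((swap a c).injective (by simp [h]))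
  exact ⟨swap (swap a c b) d * swap a c, by simp [swap_apply_of_ne_of_ne hb.symm hcd], by simp⟩

lemma inv_apply_lt_inv_apply_mul_swap {α : Type*} [LinearOrder α] [DecidableEq α]
    {a a' b b' : α} {σ : Perm α} (ha : a ⋖ a')
    (hσ : σ⁻¹ b' < σ⁻¹ b) (hσR : ¬(σ a = b' ∧ σ a' = b)) :
    (σ * swap a a')⁻¹ b' < (σ * swap a a')⁻¹ b := by
  have h₁ : ¬(σ⁻¹ b' = a ∧ σ⁻¹ b = a') := fun ⟨h, h'⟩ =>
    hσR ⟨by rw [← h]; simp, by rw [← h']; simp⟩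
  have h₂ : ¬(σ⁻¹ b' = a' ∧ σ⁻¹ b = a) := fun ⟨h, h'⟩ =>
    (h ▸ h' ▸ hσ).not_gt ha.lt
  simpa only [mul_inv_rev, swap_inv, Perm.mul_apply] using
    (swap_apply_lt_swap_apply_iff ha h₁ h₂).2 hσ

section

variable {α : Type*} [Fintype α] [DecidableEq α]

lemma card_perm_apply_eq_self_and_apply_eq_self {a b : α} (hab : a ≠ b) :
    #{σ : Perm α | σ a = a ∧ σ b = b} = (Fintype.card α - 2)! := by
  rw [← Fintype.card_subtype]
  have hfix : {σ : Perm α // σ a = a ∧ σ b = b} ≃ Perm {x : α // x ≠ a ∧ x ≠ b} :=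
    (subtypeEquivRight fun σ => by grind).trans
      (Perm.subtypeEquivSubtypePerm fun x : α => x ≠ a ∧ x ≠ b).symm
  rw [Fintype.card_congr hfix, Fintype.card_perm, Fintype.card_subtype]
  have hcompl : ({x | x ≠ a ∧ x ≠ b} : Finset α) = univ \ {a, b} := by ext; simp [not_or]
  rw [hcompl, card_sdiff_of_subset (subset_univ _), Finset.card_univ, card_pair hab]

lemma card_perm_apply_eq_and_apply_eq {a b c d : α} (hab : a ≠ b) (hcd : c ≠ d) :
    #{σ : Perm α | σ a = c ∧ σ b = d} = (Fintype.card α - 2)! := by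
  obtain ⟨g, rfl, rfl⟩ := exists_perm_apply_eq_and_apply_eq hab hcd
  rw [← card_perm_apply_eq_self_and_apply_eq_self hab]
  refine card_nbij' (g⁻¹ * ·) (g * ·) ?_ ?_ (fun σ _ => by simp) (fun σ _ => by simp) <;>
    intro σ hσ <;> simp_all [Perm.mul_apply]

variable [LinearOrder α]

lemma two_mul_card_perm_inv_apply_lt {b b' : α} (hb : b ≠ b') :
    2 * #{σ : Perm α | σ⁻¹ b' < σ⁻¹ b} = (Fintype.card α)! := by
  rw [← Fintype.card_perm, ← Finset.card_univ]
  refine two_mul_card_filter_of_involutive (f := (swap b b' * ·))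
    (fun σ => by simp [← mul_assoc]) (fun _ _ => mem_univ _) _ fun σ _ => ?_
  have hne : σ⁻¹ b ≠ σ⁻¹ b' := fun h => hb (σ⁻¹.injective h)
  simp only [mul_inv_rev, swap_inv, Perm.mul_apply, swap_apply_left, swap_apply_right]
  exact ⟨lt_asymm, hne.lt_or_gt.resolve_right⟩

lemma two_mul_card_filter_descent_of_inv_descent {a a' b b' : α} (ha : a ⋖ a') :
    2 * #(({σ | σ⁻¹ b' < σ⁻¹ b ∧ ¬(σ a = b' ∧ σ a' = b)} : Finset (Perm α)).filter
        fun σ => σ a' < σ a)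
      = #{σ : Perm α | σ⁻¹ b' < σ⁻¹ b ∧ ¬(σ a = b' ∧ σ a' = b)} := by
  refine two_mul_card_filter_of_involutive (f := (· * swap a a'))
    (fun σ => by simp [mul_assoc]) (fun σ hσ => ?_) _ fun σ _ => ?_
  · simp only [mem_filter, mem_univ, true_and] at hσ ⊢
    refine ⟨inv_apply_lt_inv_apply_mul_swap ha hσ.1 hσ.2, fun ⟨h₁, h₂⟩ => ?_⟩
    simp only [Perm.mul_apply, swap_apply_left, swap_apply_right] at h₁ h₂
    exact absurd (by simpa [← h₁, ← h₂] using hσ.1 : a' < a) ha.lt.asymm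
  · have hne : σ a ≠ σ a' := fun h => ha.lt.ne (σ.injective h)
    simp only [Perm.mul_apply, swap_apply_left, swap_apply_right]
    exact ⟨lt_asymm, hne.lt_or_gt.resolve_right⟩

lemma four_mul_card_perm_descent_and_inv_descent {a a' b b' : α} (ha : a ⋖ a') (hb : b ⋖ b') :
    4 * #{σ : Perm α | σ a' < σ a ∧ σ⁻¹ b' < σ⁻¹ b}
      = (Fintype.card α)! + 2 * (Fintype.card α - 2)! := by
  set P : Perm α → Prop := fun σ => σ a' < σ a
  set Q : Finset (Perm α) := {σ | σ⁻¹ b' < σ⁻¹ b}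
  set R : Perm α → Prop := fun σ => σ a = b' ∧ σ a' = b
  have hPQ : ({σ | σ a' < σ a ∧ σ⁻¹ b' < σ⁻¹ b} : Finset (Perm α)) = Q.filter P := by
    ext σ; simp [P, Q, and_comm]
  have hRP : ∀ σ, R σ → P σ := by
    rintro σ ⟨h₁, h₂⟩
    simpa [P, h₁, h₂] using hb.lt
  have hQR : Q.filter R = univ.filter R := by
    rw [filter_filter]
    refine filter_congr fun σ _ => and_iff_right_of_imp fun ⟨h₁, h₂⟩ => ?_
    simpa [← h₁, ← h₂] using ha.lt
  have htoggle : 2 * #((Q.filter (¬ R ·)).filter P) = #(Q.filter (¬ R ·)) := by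
    simpa only [Q, filter_filter] using two_mul_card_filter_descent_of_inv_descent ha
  have hcardR : #(univ.filter R) = (Fintype.card α - 2)! :=
    card_perm_apply_eq_and_apply_eq ha.lt.ne hb.lt.ne'
  have hsplitQ := card_filter_add_card_filter_not (s := Q) R
  have hsplitPQ := card_filter_add_card_filter_not (s := Q.filter P) R
  rw [filter_filter, filter_congr fun σ _ => and_iff_right_of_imp (hRP σ), hQR, hcardR,
    filter_comm] at hsplitPQ
  rw [hQR, hcardR] at hsplitQ
  have hQ : 2 * #Q = _ := two_mul_card_perm_inv_apply_lt hb.lt.ne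
  rw [hPQ]
  linarith

end

lemma sum_des_mul_des_inv (n : ℕ) :
    ∑ π : Perm (Fin n), des π * des π⁻¹ = ∑ i ∈ range (n - 1), ∑ j ∈ range (n - 1),
      #{π : Perm (Fin n) |
        permVal π (i + 1) < permVal π i ∧ permVal π⁻¹ (j + 1) < permVal π⁻¹ j} := by
  simp only [des, card_filter, sum_mul_sum, ite_zero_mul_ite_zero, mul_one]
  rw [sum_comm]
  exact sum_congr rfl fun i _ => sum_comm

lemma permVal_lt_permVal_iff {n i : ℕ} (π : Perm (Fin n)) (hi : i + 1 < n) :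
    permVal π (i + 1) < permVal π i ↔ π ⟨i + 1, hi⟩ < π ⟨i, by omega⟩ := by
  rw [permVal, permVal, dif_pos hi, dif_pos (by omega), Fin.lt_def]

lemma four_mul_card_permVal_descent_and_inv_descent {n i j : ℕ} (hi : i + 1 < n)
    (hj : j + 1 < n) :
    4 * #{π : Perm (Fin n) |
        permVal π (i + 1) < permVal π i ∧ permVal π⁻¹ (j + 1) < permVal π⁻¹ j}
      = n ! + 2 * (n - 2)! := by
  simp only [permVal_lt_permVal_iff _ hi, permVal_lt_permVal_iff _ hj]
  simpa using four_mul_card_perm_descent_and_inv_descent (α := Fin n)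
    (a := ⟨i, by omega⟩) (a' := ⟨i + 1, hi⟩)
    (b := ⟨j, by omega⟩) (b' := ⟨j + 1, hj⟩)
    (by simp [Fin.covBy_iff]) (by simp [Fin.covBy_iff])

lemma four_mul_sum_des_mul_des_inv (n : ℕ) :
    4 * ∑ π : Perm (Fin n), des π * des π⁻¹ = (n - 1) ^ 2 * (n ! + 2 * (n - 2)!) := by
  rw [sum_des_mul_des_inv, mul_sum]
  simp_rw [mul_sum]
  rw [sum_congr rfl fun i hi => sum_congr rfl fun j hj =>
    four_mul_card_permVal_descent_and_inv_descent
      (by have := mem_range.1 hi; omega) (by have := mem_range.1 hj; omega)]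
  simp [sq, mul_assoc]

/-- The covariance of `des(π)` and `des(π⁻¹)` for a uniformly random permutation `π`
of `S_n` is `(n-1)/(2n)`. -/
theorem descents_inverse_covariance (n : ℕ) (hn : 2 ≤ n) :
    (∑ π : Equiv.Perm (Fin n), (des π : ℚ) * (des π⁻¹ : ℚ)) / (Nat.factorial n : ℚ)
        - (((n : ℚ) - 1) / 2) ^ 2 = ((n : ℚ) - 1) / (2 * (n : ℚ)) := by
  obtain ⟨m, rfl⟩ : ∃ m, n = m + 2 := ⟨n - 2, by omega⟩
  have hsum : ∑ π : Perm (Fin (m + 2)), (des π : ℚ) * des π⁻¹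
      = ((m : ℚ) + 1) ^ 2 * ((m + 2)! + 2 * m !) / 4 := by
    have := four_mul_sum_des_mul_des_inv (m + 2)
    rw [eq_div_iff four_ne_zero, mul_comm]
    exact_mod_cast this
  rw [hsum, factorial_succ, factorial_succ]
  push_cast
  field_simp
  ring
end

section
/- For a uniformly random permutation π of S_n, let D_n = des(π) and D'_n = des(π⁻¹). Then E[ (D_n − (n−1)/2)² · (D'_n − (n−1)/2)² ] is of order n²; that is, there exists a constant C > 0 such that for all n ≥ 1, (1/n!) Σ_{π ∈ S_n} (des(π) − (n−1)/2)² (des(π⁻¹) − (n−1)/2)² ≤ C·n². -/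
open Finset

/-!
By AM-GM and the symmetry `π ↦ π⁻¹`, the mixed moment is at most the fourth central moment
`E[(D_n - (n-1)/2)⁴]`. Writing `D_n - (n-1)/2 = ∑ᵢ Yᵢ` with `Yᵢ = ±1/2` the centred descent
indicators, the fourth power expands into `(n-1)⁴` terms `E[Yᵢ Yⱼ Yₖ Yₗ]`. If one index, say `i`,
is at distance at least `2` from the others, right multiplication by the transposition of the
positions `i, i+1` negates `Yᵢ` and fixes the other three factors, so the term vanishes. The
remaining quadruples are covered by two clusters of width `5`, so there are `O(n²)` of them, and
each term is bounded by `1`.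
-/

noncomputable def centredDescent {n : ℕ} (π : Equiv.Perm (Fin n)) (i : ℕ) : ℝ :=
  if permVal π (i + 1) < permVal π i then 1 / 2 else -1 / 2

lemma abs_centredDescent {n : ℕ} (π : Equiv.Perm (Fin n)) (i : ℕ) :
    |centredDescent π i| = 1 / 2 := by
  unfold centredDescent; split <;> norm_num

lemma des_sub_eq_sum_centredDescent {n : ℕ} (hn : 1 ≤ n) (π : Equiv.Perm (Fin n)) :
    (des π : ℝ) - ((n : ℝ) - 1) / 2 = ∑ i ∈ range (n - 1), centredDescent π i := by
  have hcentred : ∀ i, centredDescent π i =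
      (if permVal π (i + 1) < permVal π i then 1 else 0) - 1 / 2 := fun i => by
    unfold centredDescent; split <;> norm_num
  rw [des, card_filter]
  push_cast
  simp only [hcentred, sum_sub_distrib, sum_const, card_range, nsmul_eq_mul, Nat.cast_sub hn]
  ring

section AdjacentSwap

variable {n i : ℕ} (hi : i + 1 < n) (π : Equiv.Perm (Fin n))

lemma permVal_mul_swap_left :
    permVal (π * Equiv.swap ⟨i, by omega⟩ ⟨i + 1, hi⟩) i = permVal π (i + 1) := by
  simp [permVal, hi, show i < n by omega]

lemma permVal_mul_swap_right :
    permVal (π * Equiv.swap ⟨i, by omega⟩ ⟨i + 1, hi⟩) (i + 1) = permVal π i := by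
  simp [permVal, hi, show i < n by omega]

lemma permVal_mul_swap_of_ne {j : ℕ} (hji : j ≠ i) (hji' : j ≠ i + 1) :
    permVal (π * Equiv.swap ⟨i, by omega⟩ ⟨i + 1, hi⟩) j = permVal π j := by
  unfold permVal
  split_ifs with hj
  · rw [Equiv.Perm.mul_apply, Equiv.swap_apply_of_ne_of_ne] <;> simp [Fin.ext_iff, hji, hji']
  · rfl

lemma centredDescent_mul_swap_self :
    centredDescent (π * Equiv.swap ⟨i, by omega⟩ ⟨i + 1, hi⟩) i = -centredDescent π i := by
  have hne : permVal π i ≠ permVal π (i + 1) := by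
    simpa [permVal, hi, show i < n by omega] using
      Fin.val_injective.ne (π.injective.ne (by simp : (⟨i, _⟩ : Fin n) ≠ ⟨i + 1, hi⟩))
  unfold centredDescent
  rw [permVal_mul_swap_left hi, permVal_mul_swap_right hi]
  split_ifs <;> first | omega | norm_num

lemma centredDescent_mul_swap_of_far {j : ℕ} (hij : i + 2 ≤ j ∨ j + 2 ≤ i) :
    centredDescent (π * Equiv.swap ⟨i, by omega⟩ ⟨i + 1, hi⟩) j = centredDescent π j := by
  unfold centredDescent
  rw [permVal_mul_swap_of_ne hi π (by omega) (by omega),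
    permVal_mul_swap_of_ne hi π (by omega) (by omega)]

end AdjacentSwap

def HasIsolatedCoord {ι : Type*} (x : ι → ℕ) : Prop :=
  ∃ t, ∀ u ≠ t, x t + 2 ≤ x u ∨ x u + 2 ≤ x t

lemma sum_prod_centredDescent_eq_zero {n : ℕ} {ι : Type*} [Fintype ι] [DecidableEq ι]
    (x : ι → ℕ) (t : ι) (ht : x t + 1 < n) (hiso : ∀ u ≠ t, x t + 2 ≤ x u ∨ x u + 2 ≤ x t) :
    ∑ π : Equiv.Perm (Fin n), ∏ u, centredDescent π (x u) = 0 := by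
  set s := Equiv.swap (⟨x t, by omega⟩ : Fin n) ⟨x t + 1, ht⟩
  have hflip : ∀ π : Equiv.Perm (Fin n),
      ∏ u, centredDescent (π * s) (x u) = -∏ u, centredDescent π (x u) := fun π => by
    rw [← mul_prod_erase univ _ (mem_univ t), ← mul_prod_erase univ _ (mem_univ t),
      centredDescent_mul_swap_self ht,
      prod_congr rfl fun u hu => centredDescent_mul_swap_of_far ht π (hiso u (ne_of_mem_erase hu))]
    ring
  have h := Equiv.sum_comp (Equiv.mulRight s) fun π => ∏ u, centredDescent π (x u)
  simp only [Equiv.coe_mulRight, hflip, sum_neg_distrib] at h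
  linarith

lemma sum_prod_centredDescent_le {n : ℕ} {ι : Type*} [Fintype ι] (x : ι → ℕ) :
    ∑ π : Equiv.Perm (Fin n), ∏ u, centredDescent π (x u) ≤ n.factorial := by
  have hle : ∀ π : Equiv.Perm (Fin n), ∏ u, centredDescent π (x u) ≤ 1 := fun π =>
    calc _ ≤ |∏ u, centredDescent π (x u)| := le_abs_self _
      _ = (1 / 2) ^ Fintype.card ι := by simp [abs_prod, abs_centredDescent]
      _ ≤ 1 := pow_le_one₀ (by norm_num) (by norm_num)
  calc _ ≤ ∑ _π : Equiv.Perm (Fin n), (1 : ℝ) := sum_le_sum fun π _ => hle π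
    _ = n.factorial := by simp [Fintype.card_perm]

lemma exists_cover_of_not_hasIsolatedCoord (x : Fin 4 → ℕ) (h : ¬HasIsolatedCoord x) :
    ∃ v, ∀ t, x t ∈ Icc (x 0 - 2) (x 0 + 2) ∪ Icc (x v - 2) (x v + 2) := by
  -- Each component of the graph `|x t - x u| ≤ 1` has at least two of the four vertices.
  simp [HasIsolatedCoord, Fin.forall_fin_succ, Fin.exists_fin_succ] at h ⊢
  omega

open Classical in
lemma card_filter_not_hasIsolatedCoord_le (m : ℕ) :
    #{x ∈ Fintype.piFinset (fun _ : Fin 4 => range m) | ¬HasIsolatedCoord x} ≤ 10 ^ 4 * m ^ 2 := by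
  calc _ ≤ #((range m ×ˢ range m).biUnion fun p =>
          Fintype.piFinset fun _ : Fin 4 => Icc (p.1 - 2) (p.1 + 2) ∪ Icc (p.2 - 2) (p.2 + 2)) := by
        refine card_le_card fun x hx => ?_
        obtain ⟨hxm, hx⟩ := mem_filter.1 hx
        obtain ⟨v, hv⟩ := exists_cover_of_not_hasIsolatedCoord x hx
        rw [Fintype.mem_piFinset] at hxm
        exact mem_biUnion.2 ⟨(x 0, x v), mem_product.2 ⟨hxm 0, hxm v⟩, Fintype.mem_piFinset.2 hv⟩
    _ ≤ #(range m ×ˢ range m) * 10 ^ 4 := by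
        refine card_biUnion_le_card_mul _ _ _ fun p _ => ?_
        rw [Fintype.card_piFinset_const]
        refine Nat.pow_le_pow_left ((card_union_le _ _).trans ?_) 4
        simp only [Nat.card_Icc]
        omega
    _ = 10 ^ 4 * m ^ 2 := by rw [card_product, card_range]; ring

open Classical in
lemma sum_des_sub_pow_four_le {n : ℕ} (hn : 1 ≤ n) :
    ∑ π : Equiv.Perm (Fin n), ((des π : ℝ) - ((n : ℝ) - 1) / 2) ^ 4
      ≤ 10 ^ 4 * (n : ℝ) ^ 2 * n.factorial := by
  set Q := Fintype.piFinset fun _ : Fin 4 => range (n - 1)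
  have hexpand : ∑ π : Equiv.Perm (Fin n), ((des π : ℝ) - ((n : ℝ) - 1) / 2) ^ 4
      = ∑ x ∈ Q, ∑ π : Equiv.Perm (Fin n), ∏ t, centredDescent π (x t) := by
    simp_rw [des_sub_eq_sum_centredDescent hn, sum_pow']
    exact sum_comm
  have hvanish : ∑ x ∈ Q with HasIsolatedCoord x,
      ∑ π : Equiv.Perm (Fin n), ∏ t, centredDescent π (x t) = 0 := by
    refine sum_eq_zero fun x hx => ?_
    obtain ⟨hxQ, t, ht⟩ := mem_filter.1 hx
    have hxt := mem_range.1 (Fintype.mem_piFinset.1 hxQ t)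
    exact sum_prod_centredDescent_eq_zero x t (by omega) ht
  have hcard : (#{x ∈ Q | ¬HasIsolatedCoord x} : ℝ) ≤ 10 ^ 4 * (n : ℝ) ^ 2 := by
    have : #{x ∈ Q | ¬HasIsolatedCoord x} ≤ 10 ^ 4 * (n - 1) ^ 2 :=
      card_filter_not_hasIsolatedCoord_le (n - 1)
    have : (n - 1) ^ 2 ≤ n ^ 2 := Nat.pow_le_pow_left (n.sub_le 1) 2
    exact_mod_cast (by omega : #{x ∈ Q | ¬HasIsolatedCoord x} ≤ 10 ^ 4 * n ^ 2)
  rw [hexpand, ← sum_filter_add_sum_filter_not Q HasIsolatedCoord, hvanish, zero_add]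
  calc _ ≤ ∑ x ∈ Q with ¬HasIsolatedCoord x, (n.factorial : ℝ) :=
        sum_le_sum fun x _ => sum_prod_centredDescent_le x
    _ ≤ _ := by
        rw [sum_const, nsmul_eq_mul]
        gcongr

lemma sum_sq_mul_sq_inv_le_sum_pow_four {G : Type*} [Group G] [Fintype G] (f : G → ℝ) :
    ∑ g, f g ^ 2 * f g⁻¹ ^ 2 ≤ ∑ g, f g ^ 4 := by
  calc _ ≤ ∑ g, (f g ^ 4 + f g⁻¹ ^ 4) / 2 :=
        sum_le_sum fun g _ => by nlinarith [sq_nonneg (f g ^ 2 - f g⁻¹ ^ 2)]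
    _ = ∑ g, f g ^ 4 := by
        rw [← sum_div, sum_add_distrib,
          Fintype.sum_equiv (Equiv.inv G) (fun g => f g⁻¹ ^ 4) (fun g => f g ^ 4) fun _ => rfl]
        ring

/-- The mixed fourth central moment `E[(D_n - (n-1)/2)² (D'_n - (n-1)/2)²]`, where
`D_n = des(π)` and `D'_n = des(π⁻¹)` for a uniformly random permutation `π`, is of
order `n²`. -/
theorem descents_inverse_mixed_moment_order :
    ∃ C : ℝ, 0 < C ∧ ∀ n : ℕ, 1 ≤ n →
      (∑ π : Equiv.Perm (Fin n),
          ((des π : ℝ) - ((n : ℝ) - 1) / 2) ^ 2 * ((des π⁻¹ : ℝ) - ((n : ℝ) - 1) / 2) ^ 2)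
        / (Nat.factorial n : ℝ) ≤ C * (n : ℝ) ^ 2 := by
  refine ⟨10 ^ 4, by norm_num, fun n hn => ?_⟩
  rw [div_le_iff₀ (by positivity)]
  calc _ ≤ ∑ π : Equiv.Perm (Fin n), ((des π : ℝ) - ((n : ℝ) - 1) / 2) ^ 4 :=
        sum_sq_mul_sq_inv_le_sum_pow_four fun π => (des π : ℝ) - ((n : ℝ) - 1) / 2
    _ ≤ _ := sum_des_sub_pow_four_le hn
end
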